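/- arXiv:1309.4158 — 4 statements merged into one kernel-verified Lean document; each statement's English description precedes it below -/
import Mathlib

section
/- For multinomial weights (w_1^{(n)},...,w_n^{(n)}) ~ Multinomial(n; 1/n,...,1/n), the quantity n · Σ_{i=1}^n (w_i^{(n)}/n − 1/n)^2 − (1 − 1/n) converges to 0 in probability as n → ∞; in particular n Σ_{i=1}^n (w_i^{(n)}/n − 1/n)^2 → 1 in probability. -/
/-!
Let `D` be the number of ordered pairs `j ≠ k` of draws that land in the same cell. Since
`Σᵢ wᵢ² = n + D` and `Σᵢ wᵢ = n`, the statistic `n Σᵢ (wᵢ/n − 1/n)²` equals `D / n`. Each collision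
indicator `1[f j = f k]` has mean `1/n`, and two of them are uncorrelated unless they belong to
the same unordered pair, so `E D = n − 1` and `Var D = 2 (n − 1)² / n`. Chebyshev's inequality
bounds the probability of a deviation `ε` of `D / n` from `1 − 1/n` by `2 / (n ε²)`.
-/

open MeasureTheory Finset Filter

/-- The law of `n` i.i.d. uniform draws from `{0,...,n-1}`: the uniform probability
measure on the finite space `Fin n → Fin n`. The multinomial weight vector
`(w_1,...,w_n) ~ Multinomial(n; 1/n,...,1/n)` is obtained from it via `mw`. -/
noncomputable def multinomialMeasure (n : ℕ) : Measure (Fin n → Fin n) :=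
  ((Fintype.card (Fin n → Fin n) : ENNReal))⁻¹ • Measure.count

/-- `mw n i f` is the multinomial weight `w_{i+1}^{(n)}`: the number of draws
(among the `n` draws recorded by `f`) that fall on cell `i`. -/
def mw (n : ℕ) (i : ℕ) (f : Fin n → Fin n) : ℕ :=
  (Finset.univ.filter (fun j => (f j : ℕ) = i)).card

open ProbabilityTheory

theorem natCast_card_offDiag_univ {ι : Type*} [Fintype ι] :
    ((#(univ : Finset ι).offDiag : ℕ) : ℝ) = Fintype.card ι * (Fintype.card ι - 1) := by
  rw [offDiag_card, card_univ, Nat.cast_sub (Nat.le_mul_self _), Nat.cast_mul]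
  ring

section Collisions

variable {ι α : Type*} [Fintype ι] [DecidableEq α]

def collisions (f : ι → α) : ℕ := #{p ∈ (univ : Finset ι).offDiag | f p.1 = f p.2}

theorem natCast_collisions (f : ι → α) :
    (collisions f : ℝ) = ∑ p ∈ (univ : Finset ι).offDiag, if f p.1 = f p.2 then 1 else 0 :=
  natCast_card_filter _ _

variable [Fintype α] [DecidableEq ι]

theorem sum_card_fiber_sq (f : ι → α) :
    ∑ a, #{j | f j = a} ^ 2 = Fintype.card ι + collisions f := by
  have hfiber : ∀ a, #{j | f j = a} ^ 2 = #{q ∈ {q : ι × ι | f q.1 = f q.2} | f q.1 = a} := by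
    intro a
    rw [sq, ← card_product]
    congr 1
    ext q
    simp only [mem_product, mem_filter, mem_univ, true_and]
    constructor
    · rintro ⟨h1, h2⟩; exact ⟨h1.trans h2.symm, h1⟩
    · rintro ⟨h, h1⟩; exact ⟨h1, h ▸ h1⟩
  rw [sum_congr rfl fun a _ => hfiber a, ← card_eq_sum_card_fiberwise (fun _ _ => mem_univ _),
    ← univ_product_univ, ← diag_union_offDiag univ, filter_union, card_union_of_disjoint
      (disjoint_filter_filter (disjoint_diag_offDiag _)), collisions]
  congr 1
  rw [filter_true_of_mem fun q hq => by rw [(mem_diag.1 hq).2], diag_card, card_univ]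

theorem sum_card_fiber_sub_one_sq (f : ι → α) :
    ∑ a, (((#{j | f j = a} : ℕ) : ℝ) - 1) ^ 2
      = (collisions f : ℝ) + Fintype.card α - Fintype.card ι := by
  have hsq := congrArg (Nat.cast (R := ℝ)) (sum_card_fiber_sq f)
  have hlin := congrArg (Nat.cast (R := ℝ))
    (card_eq_sum_card_fiberwise (f := f) (s := univ) fun _ _ => mem_univ _)
  push_cast at hsq hlin
  simp only [sub_sq, mul_one, one_pow, sum_add_distrib, sum_sub_distrib, hsq, sum_const,
    nsmul_eq_mul]
  rw [← mul_sum, ← hlin, card_univ, card_univ]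
  ring

theorem sum_ite_apply_eq_apply (t : ι) (c : {j // j ≠ t}) (F : ({j // j ≠ t} → α) → ℝ) :
    ∑ f : ι → α, (if f t = f c then F (fun j => f j) else 0) = ∑ g, F g := by
  rw [← (Equiv.funSplitAt t α).symm.sum_comp, Fintype.sum_prod_type_right]
  refine sum_congr rfl fun g _ => ?_
  have hg : (fun j : {j // j ≠ t} => if (j : ι) = t then g c else g j) = g :=
    funext fun j => if_neg j.2
  simp [Equiv.funSplitAt_symm_apply, c.2, hg]

theorem sum_ite_apply_eq {a b : ι} (hab : a ≠ b) :
    ∑ f : ι → α, (if f a = f b then (1 : ℝ) else 0)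
      = (Fintype.card α : ℝ) ^ (Fintype.card ι - 1) := by
  simpa [Fintype.card_subtype_compl] using sum_ite_apply_eq_apply a ⟨b, hab.symm⟩ fun _ => 1

theorem sum_ite_apply_eq_mul_ite_apply_eq {a b c d : ι} (hab : a ≠ b) (hdc : d ≠ c) (hda : d ≠ a)
    (hdb : d ≠ b) :
    ∑ f : ι → α, (if f a = f b then (1 : ℝ) else 0) * (if f d = f c then 1 else 0)
      = (Fintype.card α : ℝ) ^ (Fintype.card ι - 2) := by
  have hsplit := sum_ite_apply_eq_apply (α := α) d ⟨c, hdc.symm⟩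
    fun g => if g ⟨a, hda.symm⟩ = g ⟨b, hdb.symm⟩ then (1 : ℝ) else 0
  rw [sum_ite_apply_eq (α := α) (Subtype.coe_ne_coe.1 hab), Fintype.card_subtype_compl,
    Fintype.card_subtype_eq, Nat.sub_sub] at hsplit
  simpa only [mul_ite, mul_one, mul_zero] using hsplit

theorem sum_collisions :
    ∑ f : ι → α, (collisions f : ℝ)
      = Fintype.card ι * (Fintype.card ι - 1) * (Fintype.card α : ℝ) ^ (Fintype.card ι - 1) := by
  simp_rw [natCast_collisions]
  rw [sum_comm, sum_congr rfl fun p hp => sum_ite_apply_eq (mem_offDiag.1 hp).2.2, sum_const,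
    nsmul_eq_mul, natCast_card_offDiag_univ]

variable [Nonempty α]

theorem sum_centered_mul_centered_eq {p q : ι × ι} (hp : p.1 ≠ p.2) (hq : q.1 ≠ q.2) :
    ∑ f : ι → α, ((if f p.1 = f p.2 then (1 : ℝ) else 0) - (Fintype.card α : ℝ)⁻¹)
        * ((if f q.1 = f q.2 then (1 : ℝ) else 0) - (Fintype.card α : ℝ)⁻¹)
      = ∑ f : ι → α, (if f p.1 = f p.2 then (1 : ℝ) else 0) * (if f q.1 = f q.2 then 1 else 0)
        - (Fintype.card α : ℝ) ^ (Fintype.card ι - 2) := by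
  have hN : (Fintype.card α : ℝ) ≠ 0 := by simp
  obtain ⟨j, hj⟩ := Nat.exists_eq_add_of_le' (Fintype.one_lt_card_iff.2 ⟨_, _, hp⟩)
  simp only [sub_mul, mul_sub, sum_sub_distrib, ← sum_mul, ← mul_sum, sum_ite_apply_eq hp,
    sum_ite_apply_eq hq, sum_const, card_univ, Fintype.card_fun, nsmul_eq_mul, Nat.cast_pow]
  rw [hj, Nat.add_sub_cancel, show j + 2 - 1 = j + 1 from rfl]
  field_simp
  ring

/-- The collision indicators of two different unordered pairs are uncorrelated, even when the
pairs share an index. -/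
theorem sum_centered_mul_centered {p q : ι × ι} (hp : p.1 ≠ p.2) (hq : q.1 ≠ q.2) :
    ∑ f : ι → α, ((if f p.1 = f p.2 then (1 : ℝ) else 0) - (Fintype.card α : ℝ)⁻¹)
        * ((if f q.1 = f q.2 then (1 : ℝ) else 0) - (Fintype.card α : ℝ)⁻¹)
      = ((if q = p then 1 else 0) + (if q = p.swap then 1 else 0))
          * ((Fintype.card α : ℝ) - 1) * (Fintype.card α : ℝ) ^ (Fintype.card ι - 2) := by
  have hk : 2 ≤ Fintype.card ι := Fintype.one_lt_card_iff.2 ⟨_, _, hp⟩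
  rw [sum_centered_mul_centered_eq hp hq]
  by_cases hdiag : q = p ∨ q = p.swap
  · have hswap : p.swap ≠ p := fun h => hp (congrArg Prod.snd h)
    have hone : ((if q = p then 1 else 0) + (if q = p.swap then 1 else 0) : ℝ) = 1 := by
      rcases hdiag with rfl | rfl <;> simp [hswap, hswap.symm]
    have hidem : ∀ f : ι → α, (if f p.1 = f p.2 then (1 : ℝ) else 0)
        * (if f q.1 = f q.2 then 1 else 0) = if f p.1 = f p.2 then 1 else 0 := by
      intro f
      rcases hdiag with rfl | rfl <;> simp [eq_comm]
    rw [sum_congr rfl fun f _ => hidem f, sum_ite_apply_eq hp, hone,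
      show Fintype.card ι - 1 = Fintype.card ι - 2 + 1 by omega, pow_succ]
    ring
  · obtain ⟨hqp, hqs⟩ := not_or.1 hdiag
    rw [if_neg hqp, if_neg hqs]
    have hout : (q.1 ≠ p.1 ∧ q.1 ≠ p.2) ∨ (q.2 ≠ p.1 ∧ q.2 ≠ p.2) := by
      obtain ⟨q1, q2⟩ := q
      obtain ⟨p1, p2⟩ := p
      simp only [Prod.ext_iff, Prod.swap] at *
      grind
    rcases hout with ⟨h1, h2⟩ | ⟨h1, h2⟩
    · rw [sum_ite_apply_eq_mul_ite_apply_eq hp hq h1 h2]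
      ring
    · have hsymm : ∀ f : ι → α, (if f q.1 = f q.2 then (1 : ℝ) else 0)
          = if f q.2 = f q.1 then 1 else 0 := fun f => by simp only [eq_comm (a := f q.1)]
      simp only [hsymm]
      rw [sum_ite_apply_eq_mul_ite_apply_eq hp hq.symm h1 h2]
      ring

theorem sum_collisions_sub_sq :
    ∑ f : ι → α, ((collisions f : ℝ) - Fintype.card ι * (Fintype.card ι - 1) / Fintype.card α) ^ 2
      = 2 * Fintype.card ι * (Fintype.card ι - 1) * (Fintype.card α - 1)
          * (Fintype.card α : ℝ) ^ (Fintype.card ι - 2) := by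
  have hcentered : ∀ f : ι → α,
      (collisions f : ℝ) - Fintype.card ι * (Fintype.card ι - 1) / Fintype.card α
        = ∑ p ∈ (univ : Finset ι).offDiag,
            ((if f p.1 = f p.2 then (1 : ℝ) else 0) - (Fintype.card α : ℝ)⁻¹) := by
    intro f
    rw [sum_sub_distrib, ← natCast_collisions, sum_const, nsmul_eq_mul, natCast_card_offDiag_univ,
      div_eq_mul_inv]
  have hcov : ∀ p ∈ (univ : Finset ι).offDiag, ∑ f : ι → α, ∑ q ∈ (univ : Finset ι).offDiag,
      ((if f p.1 = f p.2 then (1 : ℝ) else 0) - (Fintype.card α : ℝ)⁻¹)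
        * ((if f q.1 = f q.2 then (1 : ℝ) else 0) - (Fintype.card α : ℝ)⁻¹)
      = 2 * ((Fintype.card α - 1) * (Fintype.card α : ℝ) ^ (Fintype.card ι - 2)) := by
    intro p hp
    have hswap : p.swap ∈ (univ : Finset ι).offDiag := by simpa [eq_comm] using hp
    rw [sum_comm, sum_congr rfl fun q hq =>
      sum_centered_mul_centered (mem_offDiag.1 hp).2.2 (mem_offDiag.1 hq).2.2]
    simp only [add_mul, sum_add_distrib, ite_mul, one_mul, zero_mul, sum_ite_eq', hp, hswap,
      if_true]
    ring
  simp_rw [hcentered, sq, sum_mul_sum]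
  rw [sum_comm, sum_congr rfl hcov, sum_const, nsmul_eq_mul, natCast_card_offDiag_univ]
  ring

end Collisions

theorem tendsto_measure_abs_sub_ge_of_tendsto {Ω : ℕ → Type*} [∀ n, MeasurableSpace (Ω n)]
    (μ : ∀ n, Measure (Ω n)) (X : ∀ n, Ω n → ℝ) {c : ℕ → ℝ} {a : ℝ}
    (hc : Tendsto c atTop (nhds a))
    (hX : ∀ ε > 0, Tendsto (fun n => μ n {ω | ε ≤ |X n ω - c n|}) atTop (nhds 0)) :
    ∀ ε > 0, Tendsto (fun n => μ n {ω | ε ≤ |X n ω - a|}) atTop (nhds 0) := by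
  intro ε hε
  refine tendsto_of_tendsto_of_tendsto_of_le_of_le' tendsto_const_nhds (hX (ε / 2) (half_pos hε))
    (.of_forall fun _ => zero_le) ?_
  filter_upwards [Metric.tendsto_nhds.1 hc (ε / 2) (half_pos hε)] with n hn
  refine measure_mono fun ω hω => ?_
  simp only [Set.mem_ofPred_eq, Real.dist_eq] at hω hn ⊢
  linarith [abs_sub_le (X n ω) (c n) a]

section Multinomial

variable {n : ℕ}

instance : IsProbabilityMeasure (multinomialMeasure n) where
  measure_univ := by
    have : Nonempty (Fin n → Fin n) := ⟨id⟩
    rw [multinomialMeasure, Measure.smul_apply, Measure.count_univ, smul_eq_mul,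
      ENat.card_eq_coe_fintype_card]
    exact ENNReal.inv_mul_cancel (by simp) (by simp)

theorem integral_multinomialMeasure (g : (Fin n → Fin n) → ℝ) :
    ∫ f, g f ∂multinomialMeasure n = (∑ f, g f) / (n : ℝ) ^ n := by
  rw [multinomialMeasure, integral_smul_measure, integral_fintype Integrable.of_finite]
  simp [Measure.real, div_eq_inv_mul]

theorem integral_collisions (hn : n ≠ 0) :
    ∫ f, (collisions f : ℝ) ∂multinomialMeasure n = n - 1 := by
  rw [integral_multinomialMeasure, sum_collisions]
  simp only [Fintype.card_fin]
  obtain ⟨j, rfl⟩ := Nat.exists_eq_add_of_le' (Nat.one_le_iff_ne_zero.2 hn)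
  rw [Nat.add_sub_cancel, pow_succ]
  field_simp

theorem variance_collisions (hn : 2 ≤ n) :
    Var[fun f => (collisions f : ℝ); multinomialMeasure n] = 2 * (n - 1) ^ 2 / n := by
  rw [variance_eq_integral (measurable_of_finite _).aemeasurable, integral_collisions (by omega),
    integral_multinomialMeasure]
  have : Nonempty (Fin n) := ⟨⟨0, by omega⟩⟩
  have hsum := sum_collisions_sub_sq (ι := Fin n) (α := Fin n)
  simp only [Fintype.card_fin] at hsum
  have hn0 : (n : ℝ) ≠ 0 := by positivity
  rw [show (n : ℝ) - 1 = n * (n - 1) / n by field_simp, hsum]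
  obtain ⟨j, rfl⟩ := Nat.exists_eq_add_of_le' hn
  rw [Nat.add_sub_cancel, pow_add]
  field_simp

theorem mul_sum_sq_mw_eq_collisions (f : Fin n → Fin n) :
    (n : ℝ) * ∑ i ∈ range n, ((mw n i f : ℝ) / n - 1 / n) ^ 2 = (n : ℝ)⁻¹ * collisions f := by
  have hmw : ∀ a : Fin n, mw n a f = #{j | f j = a} := fun a => by simp [mw, Fin.val_inj]
  have hfib := sum_card_fiber_sub_one_sq f
  simp only [Fintype.card_fin, add_sub_cancel_right] at hfib
  rw [← Fin.sum_univ_eq_sum_range (fun i => ((mw n i f : ℝ) / n - 1 / n) ^ 2)]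
  simp only [hmw, ← sub_div, div_pow, ← sum_div, hfib]
  rcases eq_or_ne (n : ℝ) 0 with hn | hn
  · simp [hn]
  · field_simp

theorem multinomialMeasure_collisions_deviation_le (hn : 2 ≤ n) {ε : ℝ} (hε : 0 < ε) :
    multinomialMeasure n {f | ε ≤ |(n : ℝ)⁻¹ * collisions f - (1 - 1 / n)|}
      ≤ ENNReal.ofReal (2 / (n * ε ^ 2)) := by
  have hn0 : (n : ℝ) ≠ 0 := by positivity
  have hmean : ∫ f, (n : ℝ)⁻¹ * collisions f ∂multinomialMeasure n = 1 - 1 / n := by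
    rw [integral_const_mul, integral_collisions (by omega)]
    field_simp
  have hvar : Var[fun f => (n : ℝ)⁻¹ * collisions f; multinomialMeasure n] ≤ 2 / n := by
    rw [variance_const_mul, variance_collisions hn, inv_pow, ← div_eq_inv_mul, div_div,
      div_le_div_iff₀ (by positivity) (by positivity)]
    have h1 : (1 : ℝ) ≤ n := by exact_mod_cast (by omega : 1 ≤ n)
    nlinarith [mul_nonneg (Nat.cast_nonneg n : (0 : ℝ) ≤ n) (by linarith : (0 : ℝ) ≤ 2 * n - 1)]
  calc multinomialMeasure n {f | ε ≤ |(n : ℝ)⁻¹ * collisions f - (1 - 1 / n)|}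
      ≤ ENNReal.ofReal (Var[fun f => (n : ℝ)⁻¹ * collisions f; multinomialMeasure n] / ε ^ 2) := by
        rw [← hmean]
        exact meas_ge_le_variance_div_sq MemLp.of_discrete hε
    _ ≤ ENNReal.ofReal (2 / (n * ε ^ 2)) := by
        rw [← div_div]
        gcongr

theorem tendsto_multinomialMeasure_collisions_deviation {ε : ℝ} (hε : 0 < ε) :
    Tendsto (fun n : ℕ =>
      multinomialMeasure n {f | ε ≤ |(n : ℝ)⁻¹ * collisions f - (1 - 1 / n)|}) atTop (nhds 0) := by
  have hbound : Tendsto (fun n : ℕ => ENNReal.ofReal (2 / (n * ε ^ 2))) atTop (nhds 0) := by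
    have h := ENNReal.tendsto_ofReal (tendsto_const_div_atTop_nhds_zero_nat (2 / ε ^ 2))
    rw [ENNReal.ofReal_zero] at h
    exact h.congr fun n => by rw [div_div, mul_comm]
  refine tendsto_of_tendsto_of_tendsto_of_le_of_le' tendsto_const_nhds hbound
    (.of_forall fun _ => zero_le) ?_
  filter_upwards [eventually_ge_atTop 2] with n hn
  exact multinomialMeasure_collisions_deviation_le hn hε

end Multinomial

/-- `n Σᵢ (wᵢ/n − 1/n)² − (1 − 1/n) → 0` in probability;
in particular `n Σᵢ (wᵢ/n − 1/n)² → 1` in probability. -/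
theorem stmt8 :
    (∀ ε > (0 : ℝ), Tendsto (fun n : ℕ =>
        multinomialMeasure n
          {f | ε ≤ |(n : ℝ) * ∑ i ∈ Finset.range n, ((mw n i f : ℝ) / n - 1 / n) ^ 2
                    - (1 - 1 / (n : ℝ))|})
      atTop (nhds 0))
    ∧ (∀ ε > (0 : ℝ), Tendsto (fun n : ℕ =>
        multinomialMeasure n
          {f | ε ≤ |(n : ℝ) * ∑ i ∈ Finset.range n, ((mw n i f : ℝ) / n - 1 / n) ^ 2 - 1|})
      atTop (nhds 0)) := by
  have hdev : ∀ ε > (0 : ℝ), Tendsto (fun n : ℕ =>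
      multinomialMeasure n
        {f | ε ≤ |(n : ℝ) * ∑ i ∈ Finset.range n, ((mw n i f : ℝ) / n - 1 / n) ^ 2
                  - (1 - 1 / (n : ℝ))|})
      atTop (nhds 0) := fun ε hε => by
    simpa only [mul_sum_sq_mw_eq_collisions] using
      tendsto_multinomialMeasure_collisions_deviation hε
  have hshift : Tendsto (fun n : ℕ => 1 - 1 / (n : ℝ)) atTop (nhds 1) := by
    simpa using (tendsto_const_nhds (x := (1 : ℝ))).sub tendsto_one_div_atTop_nhds_zero_nat
  exact ⟨hdev, tendsto_measure_abs_sub_ge_of_tendsto _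
    (fun n f => (n : ℝ) * ∑ i ∈ Finset.range n, ((mw n i f : ℝ) / n - 1 / n) ^ 2) hshift hdev⟩
end

section
/- Let {γ_h}_{h≥1} be a summable sequence of real numbers. For multinomial weights (w_1^{(n)},...,w_n^{(n)}) ~ Multinomial(n; 1/n,...,1/n), the randomized cross term n Σ_{h=1}^{n−1} γ_h Σ_{j=1}^{n−h} (w_j^{(n)}/n − 1/n)(w_{j+h}^{(n)}/n − 1/n) converges to 0 in probability as n → ∞. -/
/-!
Write `Y_a = w_a - 1 = ∑_j x_a(U_j)` with `x_a(v) = 1[v = a] - 1/n`, a sum over the `n`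
i.i.d. uniform draws `U_j` of centred terms. The fourth-moment formula for sums of i.i.d. centred
variables, `E[Y_a Y_b Y_c Y_d] = m E[x_a x_b x_c x_d] + m(m-1)(E[x_a x_b] E[x_c x_d] + ⋯)`,
gives `E[Y_a Y_b Y_c Y_d] = O(1)`, and `O(1/n)` for pairwise distinct cells because then every
covariance `E[x_a x_b]` is `-1/n²`. In `U_h = ∑_j Y_j Y_{j+h}` (with `h ≥ 1`) only `O(n)` of the
`n²` index pairs `(j, k)` make `j, j+h, k, k+h` collide, so `E[U_h²] = O(n)` uniformly in `h`.
The cross term is `(1/n) ∑_h γ_h U_h`; Cauchy–Schwarz with weights `|γ_h|` bounds its second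
moment by `O((∑ |γ_h|)² / n)`, and Chebyshev's inequality concludes.
-/

open MeasureTheory Finset Filter

section SampleSum

variable {α : Type*}

def sampleSum (g : α → ℝ) {m : ℕ} (f : Fin m → α) : ℝ := ∑ j, g (f j)

@[simp] lemma sampleSum_zero (g : α → ℝ) (f : Fin 0 → α) : sampleSum g f = 0 := by
  simp [sampleSum]

@[simp] lemma sampleSum_cons (g : α → ℝ) {m : ℕ} (v : α) (f : Fin m → α) :
    sampleSum g (Fin.cons v f : Fin (m + 1) → α) = g v + sampleSum g f := by
  simp [sampleSum, Fin.sum_univ_succ]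

variable [Fintype α]

lemma sum_fun_fin_succ {m : ℕ} (F : (Fin (m + 1) → α) → ℝ) :
    ∑ f, F f = ∑ v, ∑ f : Fin m → α, F (Fin.cons v f) := by
  rw [← (Fin.consEquiv fun _ => α).sum_comp, Fintype.sum_prod_type]
  rfl

lemma sum_sampleSum {g : α → ℝ} (hg : ∑ v, g v = 0) (m : ℕ) :
    ∑ f : Fin m → α, sampleSum g f = 0 := by
  induction m with
  | zero => simp
  | succ m ih =>
    simp [sum_fun_fin_succ, Finset.sum_add_distrib, ← Finset.mul_sum, hg, ih]

lemma card_mul_sum_sampleSum_mul {g h : α → ℝ} (hg : ∑ v, g v = 0) (hh : ∑ v, h v = 0)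
    (m : ℕ) :
    (Fintype.card α : ℝ) * ∑ f : Fin m → α, sampleSum g f * sampleSum h f
      = m * (Fintype.card α : ℝ) ^ m * ∑ v, g v * h v := by
  induction m with
  | zero => simp
  | succ m ih =>
    have expand : ∀ v (f : Fin m → α), (g v + sampleSum g f) * (h v + sampleSum h f)
        = g v * h v * 1 + g v * sampleSum h f + h v * sampleSum g f
          + 1 * (sampleSum g f * sampleSum h f) := fun v f => by ring
    simp only [sum_fun_fin_succ, sampleSum_cons, expand, Finset.sum_add_distrib,
      ← Finset.sum_mul_sum, sum_sampleSum hg, sum_sampleSum hh, hg, hh]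
    simp only [Finset.sum_const, Finset.card_univ, Fintype.card_pi, Finset.prod_const,
      Fintype.card_fin, nsmul_eq_mul, mul_one]
    push_cast
    linear_combination (Fintype.card α : ℝ) * ih

lemma card_sq_mul_sum_sampleSum_mul_four {g₁ g₂ g₃ g₄ : α → ℝ}
    (h₁ : ∑ v, g₁ v = 0) (h₂ : ∑ v, g₂ v = 0) (h₃ : ∑ v, g₃ v = 0) (h₄ : ∑ v, g₄ v = 0)
    (m : ℕ) :
    (Fintype.card α : ℝ) ^ 2 * ∑ f : Fin m → α,
        sampleSum g₁ f * sampleSum g₂ f * sampleSum g₃ f * sampleSum g₄ f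
      = m * (Fintype.card α : ℝ) ^ (m + 1) * ∑ v, g₁ v * g₂ v * g₃ v * g₄ v
        + m * (m - 1) * (Fintype.card α : ℝ) ^ m *
          ((∑ v, g₁ v * g₂ v) * (∑ v, g₃ v * g₄ v)
            + (∑ v, g₁ v * g₃ v) * (∑ v, g₂ v * g₄ v)
            + (∑ v, g₁ v * g₄ v) * (∑ v, g₂ v * g₃ v)) := by
  induction m with
  | zero => simp
  | succ m ih =>
    -- Split off the first draw `v`. A monomial with exactly one factor from `v`, or exactly one
    -- from the remaining draws `f`, sums to zero since both parts are centred.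
    have expand : ∀ v (f : Fin m → α), (g₁ v + sampleSum g₁ f) * (g₂ v + sampleSum g₂ f)
          * (g₃ v + sampleSum g₃ f) * (g₄ v + sampleSum g₄ f)
        = g₁ v * g₂ v * g₃ v * g₄ v * 1
          + g₁ v * g₂ v * g₃ v * sampleSum g₄ f + g₁ v * g₂ v * g₄ v * sampleSum g₃ f
          + g₁ v * g₃ v * g₄ v * sampleSum g₂ f + g₂ v * g₃ v * g₄ v * sampleSum g₁ f
          + g₁ v * g₂ v * (sampleSum g₃ f * sampleSum g₄ f)
          + g₁ v * g₃ v * (sampleSum g₂ f * sampleSum g₄ f)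
          + g₁ v * g₄ v * (sampleSum g₂ f * sampleSum g₃ f)
          + g₂ v * g₃ v * (sampleSum g₁ f * sampleSum g₄ f)
          + g₂ v * g₄ v * (sampleSum g₁ f * sampleSum g₃ f)
          + g₃ v * g₄ v * (sampleSum g₁ f * sampleSum g₂ f)
          + g₁ v * (sampleSum g₂ f * sampleSum g₃ f * sampleSum g₄ f)
          + g₂ v * (sampleSum g₁ f * sampleSum g₃ f * sampleSum g₄ f)
          + g₃ v * (sampleSum g₁ f * sampleSum g₂ f * sampleSum g₄ f)
          + g₄ v * (sampleSum g₁ f * sampleSum g₂ f * sampleSum g₃ f)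
          + 1 * (sampleSum g₁ f * sampleSum g₂ f * sampleSum g₃ f * sampleSum g₄ f) :=
      fun v f => by ring
    simp only [sum_fun_fin_succ, sampleSum_cons, expand, Finset.sum_add_distrib,
      ← Finset.sum_mul_sum, sum_sampleSum h₁, sum_sampleSum h₂, sum_sampleSum h₃,
      sum_sampleSum h₄, h₁, h₂, h₃, h₄]
    simp only [Finset.sum_const, Finset.card_univ, Fintype.card_pi, Finset.prod_const,
      Fintype.card_fin, nsmul_eq_mul, mul_one]
    push_cast
    set c := (Fintype.card α : ℝ)
    linear_combination c * ih
      + c * (∑ v, g₁ v * g₂ v) * card_mul_sum_sampleSum_mul h₃ h₄ m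
      + c * (∑ v, g₁ v * g₃ v) * card_mul_sum_sampleSum_mul h₂ h₄ m
      + c * (∑ v, g₁ v * g₄ v) * card_mul_sum_sampleSum_mul h₂ h₃ m
      + c * (∑ v, g₂ v * g₃ v) * card_mul_sum_sampleSum_mul h₁ h₄ m
      + c * (∑ v, g₂ v * g₄ v) * card_mul_sum_sampleSum_mul h₁ h₃ m
      + c * (∑ v, g₃ v * g₄ v) * card_mul_sum_sampleSum_mul h₁ h₂ m

end SampleSum

noncomputable def cellDev (n a : ℕ) (v : Fin n) : ℝ := (if (v : ℕ) = a then 1 else 0) - 1 / n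

lemma card_filter_val_eq {n a : ℕ} (ha : a < n) : #{v : Fin n | (v : ℕ) = a} = 1 := by
  rw [Finset.card_eq_one]; exact ⟨⟨a, ha⟩, by ext v; simp [Fin.ext_iff]⟩

lemma sum_cellDev {n a : ℕ} (ha : a < n) : ∑ v, cellDev n a v = 0 := by
  have hn : (n : ℝ) ≠ 0 := by exact_mod_cast (Nat.zero_lt_of_lt ha).ne'
  simp [cellDev, Finset.sum_sub_distrib, Finset.sum_boole, hn, card_filter_val_eq ha]

lemma sum_cellDev_mul_cellDev {n a b : ℕ} (ha : a < n) (hb : b < n) :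
    ∑ v, cellDev n a v * cellDev n b v = (if a = b then 1 else 0) - 1 / n := by
  have hn : (n : ℝ) ≠ 0 := by exact_mod_cast (Nat.zero_lt_of_lt ha).ne'
  have expand : ∀ v : Fin n, cellDev n a v * cellDev n b v
      = (if (v : ℕ) = a ∧ (v : ℕ) = b then 1 else 0) - 1 / n * (if (v : ℕ) = a then 1 else 0)
        - 1 / n * (if (v : ℕ) = b then 1 else 0) + 1 / n ^ 2 := by
    intro v; simp only [cellDev, ite_and]; split_ifs <;> ring
  simp only [expand, Finset.sum_add_distrib, Finset.sum_sub_distrib, ← Finset.mul_sum,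
    Finset.sum_boole, card_filter_val_eq ha, card_filter_val_eq hb]
  by_cases hab : a = b
  · subst hab; simp [card_filter_val_eq ha]; field_simp; ring
  · have : #{v : Fin n | (v : ℕ) = a ∧ (v : ℕ) = b} = 0 := by
      simp only [Finset.card_eq_zero, Finset.filter_eq_empty_iff]; omega
    simp [this, hab]; field_simp; ring

lemma one_div_natCast_le_one (n : ℕ) : 1 / (n : ℝ) ≤ 1 := by
  simpa using Nat.cast_inv_le_one (α := ℝ) n

lemma abs_cellDev_le {n : ℕ} (a : ℕ) (v : Fin n) : |cellDev n a v| ≤ 1 := by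
  have h0 : 0 ≤ 1 / (n : ℝ) := by positivity
  have h1 := one_div_natCast_le_one n
  unfold cellDev; split_ifs <;> rw [abs_le] <;> constructor <;> linarith

lemma sum_abs_cellDev_le (n a : ℕ) : ∑ v, |cellDev n a v| ≤ 2 := by
  have hcell : #{v : Fin n | (v : ℕ) = a} ≤ 1 :=
    Finset.card_le_one.mpr fun v hv w hw => by simp at hv hw; omega
  have hmean : ∑ _v : Fin n, 1 / (n : ℝ) ≤ 1 := by
    rcases n.eq_zero_or_pos with rfl | hn
    · simp
    · simp [(Nat.cast_pos.mpr hn).ne']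
  calc ∑ v, |cellDev n a v|
      ≤ ∑ v : Fin n, ((if (v : ℕ) = a then 1 else 0) + 1 / (n : ℝ)) := by
        refine Finset.sum_le_sum fun v _ => (abs_sub _ _).trans_eq ?_
        rw [abs_of_nonneg (by split_ifs <;> norm_num), abs_of_nonneg (by positivity)]
    _ ≤ 2 := by
        rw [Finset.sum_add_distrib, Finset.sum_boole]
        have : (#{v : Fin n | (v : ℕ) = a} : ℝ) ≤ 1 := by exact_mod_cast hcell
        linarith

lemma abs_cellDev_mul_cellDev_le {n a b : ℕ} (hab : a ≠ b) (v : Fin n) :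
    |cellDev n a v * cellDev n b v| ≤ 1 / n := by
  have h0 : 0 ≤ 1 / (n : ℝ) := by positivity
  have h1 := one_div_natCast_le_one n
  rw [abs_mul]
  unfold cellDev
  split_ifs with ha hb hb
  · omega
  all_goals
    simp only [zero_sub, abs_neg, abs_of_nonneg h0]
    first
    | (rw [abs_of_nonneg (by linarith)]; nlinarith)
    | nlinarith

lemma abs_sum_cellDev_mul_four_le (n a b c d : ℕ) :
    |∑ v, cellDev n a v * cellDev n b v * cellDev n c v * cellDev n d v| ≤ 2 := by
  refine (Finset.abs_sum_le_sum_abs _ _).trans ((Finset.sum_le_sum fun v _ => ?_).trans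
    (sum_abs_cellDev_le n a))
  simp only [abs_mul]
  have hb := abs_cellDev_le b v
  have hc := abs_cellDev_le c v
  have hd := abs_cellDev_le d v
  calc |cellDev n a v| * |cellDev n b v| * |cellDev n c v| * |cellDev n d v|
      ≤ |cellDev n a v| * 1 * 1 * 1 := by gcongr
    _ = |cellDev n a v| := by ring

lemma abs_sum_cellDev_mul_four_le_of_ne {n a b : ℕ} (hab : a ≠ b) (c d : ℕ) :
    |∑ v, cellDev n a v * cellDev n b v * cellDev n c v * cellDev n d v| ≤ 2 / n := by
  have hsum : ∑ v, 1 / (n : ℝ) * |cellDev n c v| ≤ 1 / n * 2 := by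
    rw [← Finset.mul_sum]; gcongr; exact sum_abs_cellDev_le n c
  refine (Finset.abs_sum_le_sum_abs _ _).trans ((Finset.sum_le_sum fun v _ => ?_).trans
    (hsum.trans_eq (by ring)))
  rw [abs_mul, abs_mul]
  have hd := abs_cellDev_le d v
  calc |cellDev n a v * cellDev n b v| * |cellDev n c v| * |cellDev n d v|
      ≤ 1 / n * |cellDev n c v| * 1 := by gcongr; exact abs_cellDev_mul_cellDev_le hab v
    _ = 1 / n * |cellDev n c v| := mul_one _

noncomputable def centredCount (n a : ℕ) (f : Fin n → Fin n) : ℝ := (mw n a f : ℝ) - 1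

lemma sampleSum_cellDev {n : ℕ} (hn : n ≠ 0) (a : ℕ) (f : Fin n → Fin n) :
    sampleSum (cellDev n a) f = centredCount n a f := by
  simp [sampleSum, centredCount, cellDev, mw, Finset.sum_sub_distrib, Finset.sum_boole, hn]

lemma abs_sum_centredCount_mul_four_le_cellDev_moments {n a b c d : ℕ} (ha : a < n)
    (hb : b < n) (hc : c < n) (hd : d < n) :
    |∑ f, centredCount n a f * centredCount n b f * centredCount n c f * centredCount n d f|
      ≤ (n : ℝ) ^ n *
        (|∑ v, cellDev n a v * cellDev n b v * cellDev n c v * cellDev n d v|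
          + |(∑ v, cellDev n a v * cellDev n b v) * (∑ v, cellDev n c v * cellDev n d v)
            + (∑ v, cellDev n a v * cellDev n c v) * (∑ v, cellDev n b v * cellDev n d v)
            + (∑ v, cellDev n a v * cellDev n d v) * (∑ v, cellDev n b v * cellDev n c v)|) := by
  have hn : n ≠ 0 := by omega
  have hn1 : (1 : ℝ) ≤ n := by exact_mod_cast Nat.one_le_iff_ne_zero.mpr hn
  have moment := card_sq_mul_sum_sampleSum_mul_four (sum_cellDev ha) (sum_cellDev hb)
    (sum_cellDev hc) (sum_cellDev hd) n
  simp only [sampleSum_cellDev hn, Fintype.card_fin] at moment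
  set S4 := ∑ v, cellDev n a v * cellDev n b v * cellDev n c v * cellDev n d v
  set P := (∑ v, cellDev n a v * cellDev n b v) * (∑ v, cellDev n c v * cellDev n d v)
            + (∑ v, cellDev n a v * cellDev n c v) * (∑ v, cellDev n b v * cellDev n d v)
            + (∑ v, cellDev n a v * cellDev n d v) * (∑ v, cellDev n b v * cellDev n c v)
  have hpos : (0 : ℝ) < (n : ℝ) ^ 2 := by positivity
  refine le_of_mul_le_mul_left ?_ hpos
  rw [← abs_of_pos hpos, ← abs_mul, moment]
  calc |(n : ℝ) * n ^ (n + 1) * S4 + n * (n - 1) * n ^ n * P|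
      ≤ (n : ℝ) * n ^ (n + 1) * |S4| + n * (n - 1) * n ^ n * |P| := by
        have hcoeff : (0 : ℝ) ≤ n * (n - 1) * n ^ n := by
          have : (0 : ℝ) ≤ n - 1 := by linarith
          positivity
        refine (abs_add_le _ _).trans_eq ?_
        rw [abs_mul _ S4, abs_mul _ P, abs_of_nonneg (by positivity), abs_of_nonneg hcoeff]
    _ ≤ (n : ℝ) * n ^ (n + 1) * |S4| + n * n * n ^ n * |P| := by gcongr; linarith
    _ = |(n : ℝ) ^ 2| * (n ^ n * (|S4| + |P|)) := by
        rw [abs_of_pos hpos]; ring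

lemma abs_sum_cellDev_mul_cellDev_le_one {n a b : ℕ} (ha : a < n) (hb : b < n) :
    |∑ v, cellDev n a v * cellDev n b v| ≤ 1 := by
  have h0 : 0 ≤ 1 / (n : ℝ) := by positivity
  have h1 := one_div_natCast_le_one n
  rw [sum_cellDev_mul_cellDev ha hb, abs_le]
  split_ifs <;> constructor <;> linarith

lemma abs_sum_centredCount_mul_four_le {n a b c d : ℕ} (ha : a < n) (hb : b < n) (hc : c < n)
    (hd : d < n) :
    |∑ f, centredCount n a f * centredCount n b f * centredCount n c f * centredCount n d f|
      ≤ 5 * (n : ℝ) ^ n := by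
  refine (abs_sum_centredCount_mul_four_le_cellDev_moments ha hb hc hd).trans ?_
  have hcov {x y : ℕ} (hx : x < n) (hy : y < n) := abs_sum_cellDev_mul_cellDev_le_one hx hy
  calc (n : ℝ) ^ n * (_ + _) ≤ (n : ℝ) ^ n * (2 + 3) := by
        gcongr
        · exact abs_sum_cellDev_mul_four_le n a b c d
        · refine (abs_add_three _ _ _).trans ?_
          simp only [abs_mul]
          linarith [mul_le_one₀ (hcov ha hb) (abs_nonneg _) (hcov hc hd),
            mul_le_one₀ (hcov ha hc) (abs_nonneg _) (hcov hb hd),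
            mul_le_one₀ (hcov ha hd) (abs_nonneg _) (hcov hb hc)]
    _ = 5 * (n : ℝ) ^ n := by ring

lemma abs_sum_centredCount_mul_four_le_of_pairwise_ne {n a b c d : ℕ} (ha : a < n) (hb : b < n)
    (hc : c < n) (hd : d < n) (hab : a ≠ b) (hac : a ≠ c) (had : a ≠ d) (hbc : b ≠ c)
    (hbd : b ≠ d) (hcd : c ≠ d) :
    |∑ f, centredCount n a f * centredCount n b f * centredCount n c f * centredCount n d f|
      ≤ 5 * (n : ℝ) ^ n / n := by
  have hn : (1 : ℝ) ≤ n := by exact_mod_cast Nat.one_le_of_lt ha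
  refine (abs_sum_centredCount_mul_four_le_cellDev_moments ha hb hc hd).trans ?_
  simp only [sum_cellDev_mul_cellDev, ha, hb, hc, hd, hab, hac, had, hbc, hbd, hcd, if_false]
  calc (n : ℝ) ^ n * (_ + _) ≤ (n : ℝ) ^ n * (2 / n + 3 / n) := by
        gcongr
        · exact abs_sum_cellDev_mul_four_le_of_ne hab c d
        · rw [show (0 - 1 / (n : ℝ)) * (0 - 1 / n) + (0 - 1 / n) * (0 - 1 / n)
              + (0 - 1 / n) * (0 - 1 / n) = 3 / n / n by ring, abs_of_nonneg (by positivity)]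
          exact div_le_self (by positivity) hn
    _ = 5 * (n : ℝ) ^ n / n := by ring

noncomputable def lagCrossSum (n h : ℕ) (f : Fin n → Fin n) : ℝ :=
  ∑ j ∈ range (n - h), centredCount n j f * centredCount n (j + h) f

lemma sum_lagCrossSum_sq {n h : ℕ} :
    ∑ f, lagCrossSum n h f ^ 2 = ∑ j ∈ range (n - h), ∑ k ∈ range (n - h), ∑ f,
      centredCount n j f * centredCount n (j + h) f * centredCount n k f
        * centredCount n (k + h) f := by
  simp only [lagCrossSum, sq, Finset.sum_mul_sum, ← mul_assoc]
  rw [Finset.sum_comm]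
  exact Finset.sum_congr rfl fun j _ => Finset.sum_comm

lemma sum_abs_sum_centredCount_lag_le {n h j : ℕ} (hh : 1 ≤ h) (hj : j < n - h) :
    ∑ k ∈ range (n - h), |∑ f, centredCount n j f * centredCount n (j + h) f
        * centredCount n k f * centredCount n (k + h) f| ≤ 20 * (n : ℝ) ^ n := by
  have hn : (1 : ℝ) ≤ n := by exact_mod_cast (show 1 ≤ n by omega)
  -- For `k ∉ near` the cells `j, j + h, k, k + h` are pairwise distinct, as `h ≥ 1`.
  set near : Finset ℕ := {j, j + h, j - h}
  have hterm : ∀ k ∈ range (n - h), |∑ f, centredCount n j f * centredCount n (j + h) f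
      * centredCount n k f * centredCount n (k + h) f|
        ≤ 5 * (n : ℝ) ^ n / n + 5 * (n : ℝ) ^ n * (if k ∈ near then 1 else 0) := by
    intro k hk
    rw [Finset.mem_range] at hk
    split_ifs with hnear
    · have := abs_sum_centredCount_mul_four_le (n := n) (a := j) (b := j + h) (c := k)
        (d := k + h) (by omega) (by omega) (by omega) (by omega)
      have : 0 ≤ 5 * (n : ℝ) ^ n / n := by positivity
      linarith
    · simp only [near, Finset.mem_insert, Finset.mem_singleton, not_or] at hnear
      rw [mul_zero, add_zero]
      exact abs_sum_centredCount_mul_four_le_of_pairwise_ne (by omega) (by omega) (by omega)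
        (by omega) (by omega) (by omega) (by omega) (by omega) (by omega) (by omega)
  have hnear : ∑ k ∈ range (n - h), (if k ∈ near then (1 : ℝ) else 0) ≤ 3 := by
    rw [Finset.sum_boole]
    exact_mod_cast (Finset.card_le_card fun k hk => (Finset.mem_filter.mp hk).2).trans
      Finset.card_le_three
  have hcard : ((n - h : ℕ) : ℝ) ≤ n := by exact_mod_cast Nat.sub_le n h
  calc _ ≤ ∑ k ∈ range (n - h),
        (5 * (n : ℝ) ^ n / n + 5 * (n : ℝ) ^ n * (if k ∈ near then 1 else 0)) :=
        Finset.sum_le_sum hterm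
    _ = (n - h : ℕ) * (5 * (n : ℝ) ^ n / n)
          + 5 * (n : ℝ) ^ n * ∑ k ∈ range (n - h), (if k ∈ near then (1 : ℝ) else 0) := by
        rw [Finset.sum_add_distrib, Finset.sum_const, Finset.card_range, nsmul_eq_mul,
          Finset.mul_sum]
    _ ≤ n * (5 * (n : ℝ) ^ n / n) + 5 * (n : ℝ) ^ n * 3 := by gcongr
    _ = 20 * (n : ℝ) ^ n := by field_simp; ring

lemma sum_lagCrossSum_sq_le {n h : ℕ} (hh : 1 ≤ h) :
    ∑ f, lagCrossSum n h f ^ 2 ≤ 20 * (n : ℝ) ^ n * n := by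
  have hcard : ((n - h : ℕ) : ℝ) ≤ n := by exact_mod_cast Nat.sub_le n h
  calc ∑ f, lagCrossSum n h f ^ 2
      ≤ ∑ j ∈ range (n - h), ∑ k ∈ range (n - h), |∑ f, centredCount n j f
          * centredCount n (j + h) f * centredCount n k f * centredCount n (k + h) f| := by
        rw [sum_lagCrossSum_sq]
        exact Finset.sum_le_sum fun j _ => Finset.sum_le_sum fun k _ => le_abs_self _
    _ ≤ ∑ _j ∈ range (n - h), 20 * (n : ℝ) ^ n :=
        Finset.sum_le_sum fun j hj =>
          sum_abs_sum_centredCount_lag_le hh (Finset.mem_range.mp hj)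
    _ ≤ 20 * (n : ℝ) ^ n * n := by
        rw [Finset.sum_const, Finset.card_range, nsmul_eq_mul, mul_comm]
        gcongr

lemma crossTerm_eq_sum_lagCrossSum {n : ℕ} (hn : n ≠ 0) (γ : ℕ → ℝ) (f : Fin n → Fin n) :
    (n : ℝ) * ∑ h ∈ Ico 1 n, γ h * ∑ j ∈ range (n - h),
        ((mw n j f : ℝ) / n - 1 / n) * ((mw n (j + h) f : ℝ) / n - 1 / n)
      = (∑ h ∈ Ico 1 n, γ h * lagCrossSum n h f) / n := by
  simp only [lagCrossSum, centredCount, Finset.mul_sum, Finset.sum_div]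
  refine Finset.sum_congr rfl fun h _ => Finset.sum_congr rfl fun j _ => ?_
  field_simp

lemma sum_crossTerm_sq_le {n : ℕ} (hn : n ≠ 0) (γ : ℕ → ℝ) :
    ∑ f : Fin n → Fin n, ((n : ℝ) * ∑ h ∈ Ico 1 n, γ h * ∑ j ∈ range (n - h),
        ((mw n j f : ℝ) / n - 1 / n) * ((mw n (j + h) f : ℝ) / n - 1 / n)) ^ 2
      ≤ 20 * (∑ h ∈ Ico 1 n, |γ h|) ^ 2 * (n : ℝ) ^ n / n := by
  set G := ∑ h ∈ Ico 1 n, |γ h|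
  have cauchySchwarz : ∀ f, (∑ h ∈ Ico 1 n, γ h * lagCrossSum n h f) ^ 2
      ≤ G * ∑ h ∈ Ico 1 n, |γ h| * lagCrossSum n h f ^ 2 := fun f =>
    Finset.sum_sq_le_sum_mul_sum_of_sq_le_mul _ (fun _ _ => abs_nonneg _)
      (fun _ _ => by positivity) fun h _ => le_of_eq (by rw [mul_pow, ← sq_abs (γ h)]; ring)
  have lagBound : ∑ h ∈ Ico 1 n, |γ h| * ∑ f, lagCrossSum n h f ^ 2
      ≤ G * (20 * (n : ℝ) ^ n * n) := by
    rw [Finset.sum_mul]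
    exact Finset.sum_le_sum fun h hh => by
      gcongr; exact sum_lagCrossSum_sq_le (Finset.mem_Ico.mp hh).1
  calc _ = (∑ f, (∑ h ∈ Ico 1 n, γ h * lagCrossSum n h f) ^ 2) / n ^ 2 := by
        rw [Finset.sum_div]
        exact Finset.sum_congr rfl fun f _ => by rw [crossTerm_eq_sum_lagCrossSum hn, div_pow]
    _ ≤ (G * ∑ h ∈ Ico 1 n, |γ h| * ∑ f, lagCrossSum n h f ^ 2) / n ^ 2 := by
        gcongr
        refine (Finset.sum_le_sum fun f _ => cauchySchwarz f).trans_eq ?_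
        rw [← Finset.mul_sum, Finset.sum_comm]
        simp only [Finset.mul_sum]
    _ ≤ (G * (G * (20 * (n : ℝ) ^ n * n))) / n ^ 2 := by gcongr
    _ = 20 * G ^ 2 * (n : ℝ) ^ n / n := by field_simp

lemma uniform_meas_abs_ge_le_sum_sq {Ω : Type*} [Fintype Ω] [MeasurableSpace Ω]
    [MeasurableSingletonClass Ω] (X : Ω → ℝ) {ε : ℝ} (hε : 0 < ε) :
    ((Fintype.card Ω : ENNReal)⁻¹ • Measure.count) {ω | ε ≤ |X ω|}
      ≤ ENNReal.ofReal ((∑ ω, X ω ^ 2) / (Fintype.card Ω * ε ^ 2)) := by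
  classical
  rcases isEmpty_or_nonempty Ω with hΩ | hΩ
  · simp [Set.eq_empty_of_isEmpty]
  have hcard_pos : (0 : ℝ) < Fintype.card Ω := by exact_mod_cast Fintype.card_pos
  set A : Finset Ω := {ω | ε ≤ |X ω|}
  have hA : {ω | ε ≤ |X ω|} = (A : Set Ω) := by ext; simp [A]
  rw [Measure.smul_apply, smul_eq_mul, hA, Measure.count_apply_finset]
  have markov : (#A : ℝ) * ε ^ 2 ≤ ∑ ω, X ω ^ 2 := by
    rw [← nsmul_eq_mul]
    refine (Finset.card_nsmul_le_sum A _ _ fun ω hω => ?_).trans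
      (Finset.sum_le_sum_of_subset_of_nonneg A.subset_univ fun ω _ _ => sq_nonneg _)
    rw [← sq_abs (X ω)]
    exact pow_le_pow_left₀ hε.le (Finset.mem_filter.mp hω).2 2
  rw [← ENNReal.ofReal_natCast, ← ENNReal.ofReal_natCast, ← ENNReal.ofReal_inv_of_pos hcard_pos,
    ← ENNReal.ofReal_mul (by positivity)]
  refine ENNReal.ofReal_le_ofReal ?_
  rw [le_div_iff₀ (by positivity)]
  calc (Fintype.card Ω : ℝ)⁻¹ * #A * (Fintype.card Ω * ε ^ 2) = #A * ε ^ 2 := by field_simp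
    _ ≤ ∑ ω, X ω ^ 2 := markov

/-- for a summable sequence `γ`, the randomized cross term
`n Σ_{h=1}^{n−1} γ_h Σ_{j=1}^{n−h} (w_j/n − 1/n)(w_{j+h}/n − 1/n) → 0` in probability. -/
theorem stmt9 (γ : ℕ → ℝ) (hγ : Summable fun h => |γ h|) :
    ∀ ε > (0 : ℝ), Tendsto (fun n : ℕ =>
        multinomialMeasure n
          {f | ε ≤ |(n : ℝ) * ∑ h ∈ Finset.Ico 1 n, γ h *
                  ∑ j ∈ Finset.range (n - h),
                    ((mw n j f : ℝ) / n - 1 / n) * ((mw n (j + h) f : ℝ) / n - 1 / n)|})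
      atTop (nhds 0) := by
  intro ε hε
  set G := ∑' h, |γ h|
  have chebyshev : ∀ n ≥ 1, multinomialMeasure n
      {f | ε ≤ |(n : ℝ) * ∑ h ∈ Finset.Ico 1 n, γ h * ∑ j ∈ Finset.range (n - h),
        ((mw n j f : ℝ) / n - 1 / n) * ((mw n (j + h) f : ℝ) / n - 1 / n)|}
      ≤ ENNReal.ofReal (20 * G ^ 2 / ε ^ 2 / n) := by
    intro n hn
    have hG : ∑ h ∈ Ico 1 n, |γ h| ≤ G := hγ.sum_le_tsum _ fun _ _ => abs_nonneg _
    refine (uniform_meas_abs_ge_le_sum_sq _ hε).trans (ENNReal.ofReal_le_ofReal ?_)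
    rw [Fintype.card_fun, Fintype.card_fin, Nat.cast_pow]
    calc _ ≤ 20 * (∑ h ∈ Ico 1 n, |γ h|) ^ 2 * (n : ℝ) ^ n / n / (n ^ n * ε ^ 2) := by
          gcongr; exact sum_crossTerm_sq_le (by omega) γ
      _ ≤ 20 * G ^ 2 * (n : ℝ) ^ n / n / (n ^ n * ε ^ 2) := by gcongr
      _ = 20 * G ^ 2 / ε ^ 2 / n := by field_simp
  have decay : Tendsto (fun n : ℕ => ENNReal.ofReal (20 * G ^ 2 / ε ^ 2 / n)) atTop (nhds 0) := by
    simpa using ENNReal.tendsto_ofReal (tendsto_const_div_atTop_nhds_zero_nat _)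
  exact tendsto_of_tendsto_of_tendsto_of_le_of_le' tendsto_const_nhds decay
    (Eventually.of_forall fun _ => zero_le) (eventually_atTop.mpr ⟨1, chebyshev⟩)
end

section
/- Let {γ_h}_{h≥1} be a summable nonnegative sequence. For multinomial weights (w_1^{(n)},...,w_n^{(n)}) ~ Multinomial(n; 1/n,...,1/n), the randomized absolute cross term n Σ_{h=1}^{n−1} γ_h Σ_{j=1}^{n−h} |w_j^{(n)}/n − 1/n| · |w_{j+h}^{(n)}/n − 1/n| converges in probability to 4 e^{−2} Σ_{h=1}^∞ γ_h as n → ∞. -/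
open MeasureTheory Finset Filter

/-!
Write `a_i = |w_i - 1|`. For distinct cells the mean of `∏_{t<d} a_{c t}` does not depend on the
cells and has a closed form: split `|w - 1| = (w - 1) + 2·[w = 0]`, expand the product, and count
maps `Fin n → Fin n` (factorial moments with some cells forced empty). Each term converges as if
the `w_i` were independent Poisson(1) counts, so the mean tends to `(2/e)^d`. Hence
`E X_n = E[a_1 a_2] G_n → 4e⁻² Σγ`, where `G_n = n⁻¹ Σ_h γ_h (n - h) → Σγ` by dominated
convergence. In `E X_n²` the products `a_j a_{j+h} a_{j'} a_{j'+h'}` involve four distinct cells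
except for `O(n)` pairs `(j, j')` per lag pair, and fourth moments of `a_i` are bounded uniformly,
so `E X_n² = E[a_1 a_2 a_3 a_4] G_n² + O(1/n) → (4e⁻² Σγ)²`. Thus `X_n → 4e⁻² Σγ` in `L²`, and
Chebyshev's inequality concludes.
-/

section Counting

variable {ι α β : Type*} [Fintype ι] [Fintype α] [DecidableEq β]

open Fintype in
lemma card_filter_forall_comp_eq_and_notMem [Fintype β] [DecidableEq α] (g : ι ↪ α)
    (c : ι → β) {T : Finset β} (hc : ∀ i, c i ∉ T) :
    #{f : α → β | (∀ i, f (g i) = c i) ∧ ∀ a, f a ∉ T} = (card β - #T) ^ (card α - card ι) := by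
  set S : α → Finset β := fun a => {b | b ∉ T ∧ ∀ i, g i = a → b = c i}
  have hS : ∀ a, #(S a) = if a ∈ Set.range g then 1 else card β - #T := by
    intro a
    split_ifs with ha
    · obtain ⟨i, rfl⟩ := ha
      rw [card_eq_one]
      refine ⟨c i, ?_⟩
      ext b
      simp only [S, mem_filter, mem_univ, true_and, mem_singleton, g.injective.eq_iff]
      exact ⟨fun h => h.2 i rfl, fun h => ⟨h ▸ hc i, fun j hj => hj ▸ h⟩⟩
    · rw [← card_compl]
      congr 1
      ext b
      simp only [S, mem_filter, mem_univ, true_and, mem_compl]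
      exact ⟨And.left, fun h => ⟨h, fun i hi => absurd ⟨i, hi⟩ ha⟩⟩
  calc #{f : α → β | (∀ i, f (g i) = c i) ∧ ∀ a, f a ∉ T}
      = #(piFinset S) := by
        congr 1
        ext f
        simp only [S, mem_filter, mem_univ, true_and, mem_piFinset]
        constructor
        · rintro ⟨hfc, hfT⟩ a
          exact ⟨hfT a, fun i hi => hi ▸ hfc i⟩
        · intro h
          exact ⟨fun i => (h (g i)).2 i rfl, fun a => (h a).1⟩
    _ = ∏ a, #(S a) := card_piFinset S
    _ = (card β - #T) ^ (card α - card ι) := by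
        rw [prod_congr rfl fun a _ => hS a, prod_ite, prod_const_one, one_mul, prod_const]
        congr 1
        rw [filter_not, card_sdiff, inter_univ, Finset.card_univ]
        have hrange : ({a | a ∈ Set.range g} : Finset α) = univ.map g := by ext; simp
        rw [hrange, card_map, Finset.card_univ]

/- Double counting of the pairs `(f, g)` with `f ∘ g = c` and `g` injective: once `g` is fixed,
`f` is pinned on the range of `g` and free (avoiding `T`) elsewhere. -/
open Fintype in
lemma sum_card_embeddings_lifting [Fintype β] [DecidableEq α] (c : ι → β) {T : Finset β}
    (hc : ∀ i, c i ∉ T) :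
    ∑ f : α → β, (if ∀ a, f a ∉ T then #{g : ι ↪ α | ∀ i, f (g i) = c i} else 0)
      = (card α).descFactorial (card ι) * (card β - #T) ^ (card α - card ι) := by
  calc ∑ f : α → β, (if ∀ a, f a ∉ T then #{g : ι ↪ α | ∀ i, f (g i) = c i} else 0)
      = ∑ f : α → β, ∑ g : ι ↪ α, if (∀ i, f (g i) = c i) ∧ ∀ a, f a ∉ T then 1 else 0 := by
        refine Finset.sum_congr rfl fun f _ => ?_
        rw [card_filter]
        by_cases hT : ∀ a, f a ∉ T <;> simp [hT]
    _ = ∑ g : ι ↪ α, #{f : α → β | (∀ i, f (g i) = c i) ∧ ∀ a, f a ∉ T} := by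
        rw [sum_comm]
        simp only [card_filter]
    _ = (card α).descFactorial (card ι) * (card β - #T) ^ (card α - card ι) := by
        simp only [card_filter_forall_comp_eq_and_notMem _ c hc, sum_const, Finset.card_univ,
          card_embedding_eq, smul_eq_mul]

lemma card_embeddings_lifting_of_injective [DecidableEq ι] (f : α → β) {c : ι → β}
    (hc : Function.Injective c) :
    #{g : ι ↪ α | ∀ i, f (g i) = c i} = ∏ i, #{a | f a = c i} := by
  rw [← Fintype.card_piFinset]
  refine card_nbij (fun g => ⇑g) ?_ ?_ ?_
  · intro g hg
    simpa using hg
  · intro g _ g' _ h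
    exact DFunLike.coe_injective h
  · intro x hx
    have hx : ∀ i, f (x i) = c i := by simpa using hx
    have hinj : Function.Injective x := fun i j hij => hc (by rw [← hx i, ← hx j, hij])
    exact ⟨⟨x, hinj⟩, by simpa using hx, rfl⟩

lemma card_embeddings_lifting_const (f : α → β) (b : β) :
    #{g : ι ↪ α | ∀ i, f (g i) = b} = (#{a | f a = b}).descFactorial (Fintype.card ι) := by
  let e : {g : ι ↪ α // ∀ i, f (g i) = b} ≃ (ι ↪ {a // f a = b}) :=
    { toFun g := ⟨fun i => ⟨g.1 i, g.2 i⟩, fun i j h => g.1.injective (congrArg Subtype.val h)⟩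
      invFun g := ⟨g.trans (Function.Embedding.subtype _), fun i => (g i).2⟩ }
  rw [← Fintype.card_subtype, Fintype.card_congr e, Fintype.card_embedding_eq,
    Fintype.card_subtype]

end Counting

open scoped BigOperators Topology

lemma mw_coe {n : ℕ} (i : Fin n) (f : Fin n → Fin n) : mw n i f = #{a | f a = i} := by
  simp only [mw, Fin.val_inj]

lemma expect_eq_sum_div_pow {n : ℕ} (X : (Fin n → Fin n) → ℝ) :
    𝔼 f, X f = (∑ f, X f) / n ^ n := by
  rw [Fintype.expect_eq_sum_div_card, Fintype.card_fun, Fintype.card_fin, Nat.cast_pow]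

-- `|w - 1| = (w - 1) + 2·[w = 0]`, split into three parts so that products over cells expand into
-- sums over patterns `σ : Fin d → Fin 3`.
noncomputable def absDevPart : Fin 3 → ℕ → ℝ
  | 0, w => w
  | 1, _ => -1
  | 2, w => if w = 0 then 2 else 0

lemma abs_sub_one_eq_sum_absDevPart (w : ℕ) : |(w : ℝ) - 1| = ∑ k, absDevPart k w := by
  rw [Fin.sum_univ_three]
  rcases Nat.eq_zero_or_pos w with rfl | hw
  · norm_num [absDevPart]
  · have : (1 : ℝ) ≤ w := by exact_mod_cast hw
    rw [abs_of_nonneg (by linarith)]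
    simp [absDevPart, hw.ne', sub_eq_add_neg]

-- `k` distinct draws land in the `k` cells with `σ t = 0`, the other `n - k` draws avoid the `m`
-- cells with `σ t = 2`.
noncomputable def patternMean {d : ℕ} (n : ℕ) (σ : Fin d → Fin 3) : ℝ :=
  (-1) ^ #{t | σ t = 1} * 2 ^ #{t | σ t = 2} *
    ((n.descFactorial #{t | σ t = 0} * (n - #{t | σ t = 2}) ^ (n - #{t | σ t = 0}) : ℕ) / n ^ n)

lemma prod_absDevPart_eq {d n : ℕ} (c : Fin d → Fin n) (σ : Fin d → Fin 3) (f : Fin n → Fin n) :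
    ∏ t, absDevPart (σ t) (mw n (c t) f)
      = (-1) ^ #{t | σ t = 1} * 2 ^ #{t | σ t = 2} *
        ((if ∀ a, f a ∉ ({t | σ t = 2} : Finset (Fin d)).image c
          then ∏ t : {t // σ t = 0}, #{a | f a = c t} else 0 : ℕ) : ℝ) := by
  rw [← Fintype.prod_fiberwise σ, Fin.prod_univ_three]
  have h0 : ∏ t : {t // σ t = 0}, absDevPart (σ t) (mw n (c t) f)
      = ∏ t : {t // σ t = 0}, (#{a | f a = c t} : ℝ) :=
    Fintype.prod_congr _ _ fun t => by rw [t.2, mw_coe]; rfl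
  have h1 : ∏ t : {t // σ t = 1}, absDevPart (σ t) (mw n (c t) f) = (-1) ^ #{t | σ t = 1} := by
    rw [← Fintype.card_subtype, ← Finset.card_univ, ← prod_const]
    exact Fintype.prod_congr _ _ fun t => by rw [t.2]; rfl
  have h2 : ∏ t : {t // σ t = 2}, absDevPart (σ t) (mw n (c t) f)
      = if ∀ t : {t // σ t = 2}, mw n (c t) f = 0 then 2 ^ #{t | σ t = 2} else 0 := by
    rw [← Fintype.card_subtype, ← Finset.card_univ, ← prod_const, ← Fintype.prod_ite_zero]
    exact Fintype.prod_congr _ _ fun t => by rw [t.2]; rfl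
  have hzero : (∀ t : {t // σ t = 2}, mw n (c t) f = 0)
      ↔ ∀ a, f a ∉ ({t | σ t = 2} : Finset (Fin d)).image c := by
    simp only [mw_coe, card_eq_zero, filter_eq_empty_iff, mem_univ, true_implies, mem_image,
      mem_filter, not_exists, not_and, Subtype.forall, true_and]
    exact ⟨fun h a t ht hta => h t ht hta.symm, fun h t ht a hta => h a t ht hta.symm⟩
  rw [h0, h1, h2]
  simp only [hzero]
  split_ifs <;> push_cast <;> ring

lemma expect_prod_absDevPart {d n : ℕ} {c : Fin d → Fin n} (hc : Function.Injective c)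
    (σ : Fin d → Fin 3) :
    𝔼 f, ∏ t, absDevPart (σ t) (mw n (c t) f) = patternMean n σ := by
  set T : Finset (Fin n) := ({t | σ t = 2} : Finset (Fin d)).image c
  have hT : ∀ t : {t // σ t = 0}, c t ∉ T := by
    rintro ⟨t, ht⟩ hmem
    obtain ⟨s, hs, hst⟩ := mem_image.mp hmem
    have := (mem_filter.mp hs).2
    rw [hc hst, ht] at this
    exact absurd this (by decide)
  have hcount := sum_card_embeddings_lifting (α := Fin n) (fun t : {t // σ t = 0} => c t) hT
  have hc0 : Function.Injective fun t : {t // σ t = 0} => c t := hc.comp Subtype.val_injective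
  simp only [card_embeddings_lifting_of_injective _ hc0] at hcount
  rw [expect_eq_sum_div_pow]
  simp only [prod_absDevPart_eq, ← mul_sum, ← Nat.cast_sum]
  rw [hcount, patternMean, Fintype.card_fin, Fintype.card_subtype, card_image_of_injective _ hc,
    mul_div_assoc]

noncomputable def absDev (n i : ℕ) (f : Fin n → Fin n) : ℝ := |(mw n i f : ℝ) - 1|

noncomputable def absDevMoment (d n : ℕ) : ℝ := ∑ σ : Fin d → Fin 3, patternMean n σ

lemma expect_prod_absDev {d n : ℕ} {c : Fin d → ℕ} (hc : Function.Injective c)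
    (hcn : ∀ t, c t < n) : 𝔼 f, ∏ t, absDev n (c t) f = absDevMoment d n := by
  let c' : Fin d → Fin n := fun t => ⟨c t, hcn t⟩
  have hc' : Function.Injective c' := fun s t hst => hc (congrArg Fin.val hst)
  simp only [absDev, abs_sub_one_eq_sum_absDevPart, Fintype.prod_sum]
  rw [expect_sum_comm]
  exact sum_congr rfl fun σ _ => expect_prod_absDevPart hc' σ

lemma expect_absDev_mul_absDev {n p q : ℕ} (hp : p < n) (hq : q < n) (hpq : p ≠ q) :
    𝔼 f, absDev n p f * absDev n q f = absDevMoment 2 n := by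
  have hc : Function.Injective ![p, q] := by
    intro s t hst
    fin_cases s <;> fin_cases t <;> simp_all [eq_comm]
  rw [← expect_prod_absDev hc (by simp [Fin.forall_fin_two, hp, hq])]
  simp [Fin.prod_univ_two]

lemma expect_absDev_mul_four {n p q r s : ℕ} (hp : p < n) (hq : q < n) (hr : r < n) (hs : s < n)
    (hpq : p ≠ q) (hpr : p ≠ r) (hps : p ≠ s) (hqr : q ≠ r) (hqs : q ≠ s) (hrs : r ≠ s) :
    𝔼 f, absDev n p f * absDev n q f * (absDev n r f * absDev n s f) = absDevMoment 4 n := by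
  have hc : Function.Injective ![p, q, r, s] := by
    intro i j hij
    fin_cases i <;> fin_cases j <;> simp_all [eq_comm]
  rw [← expect_prod_absDev hc (by simp [Fin.forall_fin_succ, hp, hq, hr, hs])]
  simp [Fin.prod_univ_four, mul_assoc]

open Asymptotics in
lemma tendsto_descFactorial_mul_sub_pow_div (a u : ℕ) :
    Tendsto (fun n : ℕ => ((n.descFactorial a * (n - u) ^ (n - a) : ℕ) : ℝ) / n ^ n) atTop
      (𝓝 (Real.exp (-u))) := by
  have hequiv : (fun n : ℕ => ((n.descFactorial a * (n - u) ^ (n - a) : ℕ) : ℝ) / n ^ n)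
      ~[atTop] fun n : ℕ => (n : ℝ) ^ a * ((n - u : ℕ) : ℝ) ^ (n - a) / n ^ n := by
    push_cast
    exact ((isEquivalent_descFactorial a).mul IsEquivalent.refl).div IsEquivalent.refl
  refine hequiv.symm.tendsto_nhds ?_
  have hbase : Tendsto (fun n : ℕ => 1 + (-u : ℝ) / n) atTop (𝓝 1) := by
    simpa using tendsto_const_nhds.add (tendsto_const_div_atTop_nhds_zero_nat (-u : ℝ))
  have hlim := (Real.tendsto_one_add_div_pow_exp (-u : ℝ)).div (hbase.pow a) (by norm_num)
  rw [one_pow, div_one] at hlim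
  refine hlim.congr' ?_
  filter_upwards [eventually_gt_atTop (a + u)] with n hn
  have hn0 : (n : ℝ) ≠ 0 := by exact_mod_cast (show n ≠ 0 by omega)
  have hnu : ((n - u : ℕ) : ℝ) ≠ 0 := by exact_mod_cast (show n - u ≠ 0 by omega)
  have hbase_eq : 1 + (-u : ℝ) / n = ((n - u : ℕ) : ℝ) / n := by
    rw [Nat.cast_sub (by omega)]; field_simp; ring
  obtain ⟨m, rfl⟩ : ∃ m, n = m + a := ⟨n - a, by omega⟩
  simp only [Pi.div_apply, hbase_eq, Nat.add_sub_cancel]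
  rw [div_pow, div_pow, pow_add, pow_add]
  field_simp

-- As for a Poisson(1) count `w`: `E w = 1` and `P(w = 0) = e⁻¹`.
noncomputable def absDevPartLimit : Fin 3 → ℝ := ![1, -1, 2 * Real.exp (-1)]

lemma tendsto_patternMean {d : ℕ} (σ : Fin d → Fin 3) :
    Tendsto (fun n => patternMean n σ) atTop (𝓝 (∏ t, absDevPartLimit (σ t))) := by
  have hlim : ∏ t, absDevPartLimit (σ t)
      = (-1) ^ #{t | σ t = 1} * 2 ^ #{t | σ t = 2} * Real.exp (-(#{t | σ t = 2} : ℕ)) := by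
    rw [← Fintype.prod_fiberwise' σ, Fin.prod_univ_three]
    simp only [prod_const, Finset.card_univ, Fintype.card_subtype, absDevPartLimit]
    simp [mul_pow, ← Real.exp_nat_mul, mul_assoc]
  rw [hlim]
  simpa only [patternMean] using
    tendsto_const_nhds.mul (tendsto_descFactorial_mul_sub_pow_div _ _)

lemma tendsto_absDevMoment (d : ℕ) :
    Tendsto (absDevMoment d) atTop (𝓝 ((2 * Real.exp (-1)) ^ d)) := by
  have hlim : (2 * Real.exp (-1)) ^ d = ∑ σ : Fin d → Fin 3, ∏ t, absDevPartLimit (σ t) := by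
    rw [← Fintype.prod_sum (fun _ k => absDevPartLimit k)]
    simp [Fin.sum_univ_three, absDevPartLimit]
  rw [hlim]
  exact tendsto_finsetSum _ fun σ _ => tendsto_patternMean σ

lemma expect_descFactorial_mw_le {n : ℕ} (i : Fin n) (k : ℕ) :
    𝔼 f, ((mw n i f).descFactorial k : ℝ) ≤ 1 := by
  have hcount := sum_card_embeddings_lifting (α := Fin n) (fun _ : Fin k => i)
    (T := ∅) (fun _ => notMem_empty _)
  simp only [card_embeddings_lifting_const, notMem_empty, not_false_eq_true, implies_true,
    if_true, card_empty, Fintype.card_fin, Nat.sub_zero, ← mw_coe] at hcount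
  rw [expect_eq_sum_div_pow, ← Nat.cast_sum, hcount]
  refine div_le_one_of_le₀ ?_ (by positivity)
  rcases le_or_gt k n with hk | hk
  · calc ((n.descFactorial k * n ^ (n - k) : ℕ) : ℝ) ≤ ((n ^ k * n ^ (n - k) : ℕ) : ℝ) := by
          gcongr; exact Nat.descFactorial_le_pow n k
      _ = n ^ n := by rw [← pow_add, Nat.add_sub_cancel' hk]; push_cast; rfl
  · simp [Nat.descFactorial_eq_zero_iff_lt.mpr hk]

lemma add_one_pow_four_le (w : ℕ) : (w + 1) ^ 4 ≤ 16 * w.descFactorial 4 + 4096 := by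
  rcases le_or_gt w 7 with h | h
  · calc (w + 1) ^ 4 ≤ 8 ^ 4 := Nat.pow_le_pow_left (by omega) 4
      _ ≤ 16 * w.descFactorial 4 + 4096 := by norm_num
  · obtain ⟨s, rfl⟩ : ∃ s, w = s + 3 := ⟨w - 3, by omega⟩
    have hd : (s + 3).descFactorial 4 = s * (s + 1) * (s + 2) * (s + 3) := by
      simp [Nat.descFactorial]; ring
    rw [hd]
    nlinarith [h]

lemma expect_absDev_pow_four_le (n i : ℕ) : 𝔼 f, absDev n i f ^ 4 ≤ 4112 := by
  have : Nonempty (Fin n → Fin n) := ⟨id⟩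
  rcases lt_or_ge i n with hi | hi
  · have hpoint : ∀ f, absDev n i f ^ 4 ≤ 16 * ((mw n i f).descFactorial 4 : ℝ) + 4096 := by
      intro f
      have hle : absDev n i f ≤ (mw n i f : ℝ) + 1 := by
        rw [absDev, abs_le]; constructor <;> linarith [(mw n i f).cast_nonneg (α := ℝ)]
      calc absDev n i f ^ 4 ≤ ((mw n i f : ℝ) + 1) ^ 4 := by gcongr; exact abs_nonneg _
        _ ≤ 16 * ((mw n i f).descFactorial 4 : ℝ) + 4096 := by
          exact_mod_cast add_one_pow_four_le (mw n i f)
    calc 𝔼 f, absDev n i f ^ 4 ≤ 𝔼 f, (16 * ((mw n i f).descFactorial 4 : ℝ) + 4096) :=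
          expect_le_expect fun f _ => hpoint f
      _ = 16 * 𝔼 f, ((mw n (⟨i, hi⟩ : Fin n) f).descFactorial 4 : ℝ) + 4096 := by
          rw [expect_add_distrib, ← mul_expect, Fintype.expect_const]
      _ ≤ 16 * 1 + 4096 := by gcongr; exact expect_descFactorial_mw_le _ _
      _ = 4112 := by norm_num
  · have hmw : ∀ f, mw n i f = 0 := fun f => by
      simp only [mw, card_eq_zero, filter_eq_empty_iff]; intro j _; omega
    simp [absDev, hmw, expect_const]

lemma mul_mul_mul_le_pow_four_add (a b c d : ℝ) :
    a * b * (c * d) ≤ (a ^ 4 + b ^ 4 + c ^ 4 + d ^ 4) / 4 := by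
  nlinarith [sq_nonneg (a * b - c * d), sq_nonneg (a ^ 2 - b ^ 2), sq_nonneg (c ^ 2 - d ^ 2)]

lemma expect_absDev_mul_four_mem_Icc (n p q r s : ℕ) :
    𝔼 f, absDev n p f * absDev n q f * (absDev n r f * absDev n s f) ∈ Set.Icc 0 4112 := by
  have h0 : ∀ i f, 0 ≤ absDev n i f := fun _ _ => abs_nonneg _
  refine ⟨expect_nonneg fun f _ =>
    mul_nonneg (mul_nonneg (h0 p f) (h0 q f)) (mul_nonneg (h0 r f) (h0 s f)), ?_⟩
  calc 𝔼 f, absDev n p f * absDev n q f * (absDev n r f * absDev n s f)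
      ≤ 𝔼 f, (absDev n p f ^ 4 + absDev n q f ^ 4 + absDev n r f ^ 4 + absDev n s f ^ 4) / 4 :=
        expect_le_expect fun f _ => mul_mul_mul_le_pow_four_add _ _ _ _
    _ = (𝔼 f, absDev n p f ^ 4 + 𝔼 f, absDev n q f ^ 4 + 𝔼 f, absDev n r f ^ 4
          + 𝔼 f, absDev n s f ^ 4) / 4 := by
        simp only [← expect_div, expect_add_distrib]
    _ ≤ (4112 + 4112 + 4112 + 4112) / 4 := by
        gcongr <;> exact expect_absDev_pow_four_le _ _
    _ = 4112 := by norm_num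

lemma absDevMoment_four_mem_Icc {n : ℕ} (hn : 4 ≤ n) : absDevMoment 4 n ∈ Set.Icc 0 4112 := by
  rw [← expect_absDev_mul_four (p := 0) (q := 1) (r := 2) (s := 3) (by omega) (by omega)
    (by omega) (by omega) (by omega) (by omega) (by omega) (by omega) (by omega) (by omega)]
  exact expect_absDev_mul_four_mem_Icc n 0 1 2 3

noncomputable def absCrossTerm (γ : ℕ → ℝ) (n : ℕ) (f : Fin n → Fin n) : ℝ :=
  (n : ℝ)⁻¹ * ∑ h ∈ Ico 1 n, γ h * ∑ j ∈ range (n - h), absDev n j f * absDev n (j + h) f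

noncomputable def lagWeight (γ : ℕ → ℝ) (n : ℕ) : ℝ :=
  (n : ℝ)⁻¹ * ∑ h ∈ Ico 1 n, γ h * (n - h : ℕ)

lemma mul_sum_abs_sub_div_eq_absCrossTerm (γ : ℕ → ℝ) (n : ℕ) (f : Fin n → Fin n) :
    (n : ℝ) * ∑ h ∈ Ico 1 n, γ h * ∑ j ∈ range (n - h),
        |(mw n j f : ℝ) / n - 1 / n| * |(mw n (j + h) f : ℝ) / n - 1 / n|
      = absCrossTerm γ n f := by
  have habs : ∀ i, |(mw n i f : ℝ) / n - 1 / n| = absDev n i f / n := fun i => by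
    rw [absDev, ← sub_div, abs_div, Nat.abs_cast]
  simp only [habs, absCrossTerm, Finset.mul_sum]
  refine Finset.sum_congr rfl fun h _ => Finset.sum_congr rfl fun j _ => ?_
  rcases eq_or_ne (n : ℝ) 0 with hn | hn
  · simp [hn]
  · field_simp

lemma expect_absCrossTerm (γ : ℕ → ℝ) (n : ℕ) :
    𝔼 f, absCrossTerm γ n f = absDevMoment 2 n * lagWeight γ n := by
  have hpair : ∀ h ∈ Ico 1 n, ∀ j ∈ range (n - h),
      𝔼 f, absDev n j f * absDev n (j + h) f = absDevMoment 2 n := by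
    intro h hh j hj
    rw [mem_Ico] at hh
    rw [mem_range] at hj
    exact expect_absDev_mul_absDev (by omega) (by omega) (by omega)
  simp only [absCrossTerm, lagWeight, ← mul_expect, expect_sum_comm]
  calc (n : ℝ)⁻¹ * ∑ h ∈ Ico 1 n, γ h * ∑ j ∈ range (n - h),
        𝔼 f, absDev n j f * absDev n (j + h) f
      = (n : ℝ)⁻¹ * ∑ h ∈ Ico 1 n, γ h * ((n - h : ℕ) * absDevMoment 2 n) := by
        congr 1
        refine Finset.sum_congr rfl fun h hh => ?_
        rw [Finset.sum_congr rfl (hpair h hh), sum_const, card_range, nsmul_eq_mul]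
    _ = absDevMoment 2 n * ((n : ℝ)⁻¹ * ∑ h ∈ Ico 1 n, γ h * (n - h : ℕ)) := by
        simp only [Finset.mul_sum]
        exact Finset.sum_congr rfl fun h _ => by ring

lemma expect_absCrossTerm_sq (γ : ℕ → ℝ) (n : ℕ) :
    𝔼 f, absCrossTerm γ n f ^ 2 = (n : ℝ)⁻¹ ^ 2 * ∑ h ∈ Ico 1 n, ∑ h' ∈ Ico 1 n, γ h * γ h' *
      ∑ j ∈ range (n - h), ∑ j' ∈ range (n - h'),
        𝔼 f, absDev n j f * absDev n (j + h) f * (absDev n j' f * absDev n (j' + h') f) := by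
  simp only [absCrossTerm, sq, sum_mul_sum, mul_mul_mul_comm, ← mul_expect,
    expect_sum_comm]

lemma abs_sum_le_card_mul_of_eq_zero_of_notMem {ι : Type*} [DecidableEq ι] {s E : Finset ι}
    {g : ι → ℝ} {B : ℝ} (hB : 0 ≤ B) (hzero : ∀ x ∈ s, x ∉ E → g x = 0)
    (hg : ∀ x ∈ s, |g x| ≤ B) : |∑ x ∈ s, g x| ≤ #E * B := by
  rw [← sum_subset inter_subset_left fun x hx hxE =>
    hzero x hx fun h => hxE (mem_inter.mpr ⟨hx, h⟩)]
  calc |∑ x ∈ s ∩ E, g x| ≤ ∑ x ∈ s ∩ E, |g x| := abs_sum_le_sum_abs _ _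
    _ ≤ #(s ∩ E) * B := by
        simpa using sum_le_card_nsmul _ _ _ fun x hx => hg x (mem_inter.mp hx).1
    _ ≤ #E * B := by gcongr; exact inter_subset_right

lemma abs_sum_expect_sub_absDevMoment_le {n h h' j : ℕ} (hn : 4 ≤ n) (hh : 1 ≤ h)
    (hh' : 1 ≤ h') (hj : j + h < n) :
    |∑ j' ∈ range (n - h'), (𝔼 f, absDev n j f * absDev n (j + h) f *
        (absDev n j' f * absDev n (j' + h') f) - absDevMoment 4 n)| ≤ 4 * 4112 := by
  have hρ := absDevMoment_four_mem_Icc hn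
  -- The cells `j, j + h, j', j' + h'` are distinct unless `j'` is one of these four values.
  calc _ ≤ (#{j, j + h, j - h', j + h - h'} : ℝ) * 4112 := by
        refine abs_sum_le_card_mul_of_eq_zero_of_notMem (by norm_num) (fun j' hj' hE => ?_)
          fun j' _ => ?_
        · simp only [mem_insert, mem_singleton, not_or, mem_range] at hj' hE
          rw [expect_absDev_mul_four (by omega) (by omega) (by omega) (by omega) (by omega)
            (by omega) (by omega) (by omega) (by omega) (by omega), sub_self]
        · have hE := expect_absDev_mul_four_mem_Icc n j (j + h) j' (j' + h')
          exact abs_sub_le_of_nonneg_of_le hE.1 hE.2 hρ.1 hρ.2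
    _ ≤ 4 * 4112 := by gcongr; exact_mod_cast card_le_four

lemma abs_sum_sum_mul_mul_le {ι : Type*} {s : Finset ι} {w : ι → ℝ} {K : ι → ι → ℝ} {B : ℝ}
    (hw : ∀ x ∈ s, 0 ≤ w x) (hK : ∀ x ∈ s, ∀ y ∈ s, |K x y| ≤ B) :
    |∑ x ∈ s, ∑ y ∈ s, w x * w y * K x y| ≤ (∑ x ∈ s, w x) ^ 2 * B := by
  rw [sq, sum_mul_sum, Finset.sum_mul]
  refine (abs_sum_le_sum_abs _ _).trans (sum_le_sum fun x hx => ?_)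
  rw [Finset.sum_mul]
  refine (abs_sum_le_sum_abs _ _).trans (sum_le_sum fun y hy => ?_)
  rw [abs_mul, abs_of_nonneg (mul_nonneg (hw x hx) (hw y hy))]
  exact mul_le_mul_of_nonneg_left (hK x hx y hy) (mul_nonneg (hw x hx) (hw y hy))

lemma abs_expect_absCrossTerm_sq_sub_le {γ : ℕ → ℝ} (hγ : ∀ h, 1 ≤ h → 0 ≤ γ h) {n : ℕ}
    (hn : 4 ≤ n) :
    |𝔼 f, absCrossTerm γ n f ^ 2 - absDevMoment 4 n * lagWeight γ n ^ 2|
      ≤ (∑ h ∈ Ico 1 n, γ h) ^ 2 * (4 * 4112) / n := by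
  set D : ℕ → ℕ → ℕ → ℕ → ℝ := fun h h' j j' => 𝔼 f, absDev n j f * absDev n (j + h) f *
    (absDev n j' f * absDev n (j' + h') f) - absDevMoment 4 n
  have hdecomp : 𝔼 f, absCrossTerm γ n f ^ 2 - absDevMoment 4 n * lagWeight γ n ^ 2
      = (n : ℝ)⁻¹ ^ 2 * ∑ h ∈ Ico 1 n, ∑ h' ∈ Ico 1 n, γ h * γ h' *
          ∑ j ∈ range (n - h), ∑ j' ∈ range (n - h'), D h h' j j' := by
    have hG : absDevMoment 4 n * lagWeight γ n ^ 2
        = (n : ℝ)⁻¹ ^ 2 * ∑ h ∈ Ico 1 n, ∑ h' ∈ Ico 1 n, γ h * γ h' *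
          ∑ _j ∈ range (n - h), ∑ _j' ∈ range (n - h'), absDevMoment 4 n := by
      rw [lagWeight, mul_pow, sq (∑ h ∈ Ico 1 n, _), sum_mul_sum]
      simp only [sum_const, card_range, nsmul_eq_mul, Finset.mul_sum]
      exact Finset.sum_congr rfl fun h _ => Finset.sum_congr rfl fun h' _ => by ring
    simp only [expect_absCrossTerm_sq, hG, D, ← mul_sub, ← sum_sub_distrib]
  have hinner : ∀ h ∈ Ico 1 n, ∀ h' ∈ Ico 1 n,
      |∑ j ∈ range (n - h), ∑ j' ∈ range (n - h'), D h h' j j'| ≤ n * (4 * 4112) := by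
    intro h hh h' hh'
    rw [mem_Ico] at hh hh'
    calc _ ≤ ∑ j ∈ range (n - h), |∑ j' ∈ range (n - h'), D h h' j j'| := abs_sum_le_sum_abs _ _
      _ ≤ ∑ j ∈ range (n - h), (4 * 4112 : ℝ) := sum_le_sum fun j hj =>
          abs_sum_expect_sub_absDevMoment_le hn hh.1 hh'.1 (by rw [mem_range] at hj; omega)
      _ ≤ n * (4 * 4112) := by
          rw [sum_const, card_range, nsmul_eq_mul]; gcongr; exact_mod_cast Nat.sub_le n h
  have hn0 : (0 : ℝ) < n := by exact_mod_cast (show 0 < n by omega)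
  rw [hdecomp, abs_mul, abs_of_nonneg (by positivity)]
  calc (n : ℝ)⁻¹ ^ 2 * |∑ h ∈ Ico 1 n, ∑ h' ∈ Ico 1 n, γ h * γ h' *
          ∑ j ∈ range (n - h), ∑ j' ∈ range (n - h'), D h h' j j'|
      ≤ (n : ℝ)⁻¹ ^ 2 * ((∑ h ∈ Ico 1 n, γ h) ^ 2 * (n * (4 * 4112))) := by
        gcongr
        exact abs_sum_sum_mul_mul_le (fun h hh => hγ h (mem_Ico.mp hh).1) hinner
    _ = (∑ h ∈ Ico 1 n, γ h) ^ 2 * (4 * 4112) / n := by field_simp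

lemma sum_Ico_le_tsum {γ : ℕ → ℝ} (hγ : ∀ h, 1 ≤ h → 0 ≤ γ h)
    (hsum : Summable fun h => γ (h + 1)) (n : ℕ) :
    ∑ h ∈ Ico 1 n, γ h ≤ ∑' h, γ (h + 1) := by
  rw [sum_Ico_eq_sum_range]
  simp only [add_comm 1]
  exact hsum.sum_le_tsum _ fun h _ => hγ _ (by omega)

lemma tendsto_lagWeight {γ : ℕ → ℝ} (hγ : ∀ h, 1 ≤ h → 0 ≤ γ h)
    (hsum : Summable fun h => γ (h + 1)) :
    Tendsto (lagWeight γ) atTop (𝓝 (∑' h, γ (h + 1))) := by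
  have hseries : ∀ n, lagWeight γ n = ∑' k, γ (k + 1) * ((n - (k + 1) : ℕ) / n : ℝ) := by
    intro n
    rw [tsum_eq_sum (s := range (n - 1)) fun k hk => by
      rw [mem_range] at hk; rw [Nat.sub_eq_zero_of_le (by omega)]; simp]
    rw [lagWeight, sum_Ico_eq_sum_range, Finset.mul_sum]
    exact Finset.sum_congr rfl fun k _ => by rw [add_comm 1 k]; ring
  rw [funext hseries]
  have hlim : ∀ k, Tendsto (fun n : ℕ => γ (k + 1) * ((n - (k + 1) : ℕ) / n : ℝ)) atTop
      (𝓝 (γ (k + 1))) := by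
    intro k
    have h1 : Tendsto (fun n : ℕ => 1 - ((k + 1 : ℕ) : ℝ) / n) atTop (𝓝 1) := by
      simpa using tendsto_const_nhds.sub (tendsto_const_div_atTop_nhds_zero_nat ((k + 1 : ℕ) : ℝ))
    refine (mul_one (γ (k + 1)) ▸ tendsto_const_nhds.mul h1).congr' ?_
    filter_upwards [eventually_gt_atTop (k + 1)] with n hn
    have hn0 : (n : ℝ) ≠ 0 := by exact_mod_cast (show n ≠ 0 by omega)
    rw [Nat.cast_sub hn.le]
    field_simp
  refine tendsto_tsum_of_dominated_convergence hsum hlim (Eventually.of_forall fun n k => ?_)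
  have hfrac : 0 ≤ ((n - (k + 1) : ℕ) / n : ℝ) ∧ ((n - (k + 1) : ℕ) / n : ℝ) ≤ 1 :=
    ⟨by positivity, div_le_one_of_le₀ (by exact_mod_cast Nat.sub_le _ _) (Nat.cast_nonneg _)⟩
  rw [Real.norm_eq_abs, abs_mul, abs_of_nonneg (hγ _ (by omega)), abs_of_nonneg hfrac.1]
  exact mul_le_of_le_one_right (hγ _ (by omega)) hfrac.2

lemma tendsto_expect_absCrossTerm_sub_sq {γ : ℕ → ℝ} (hγ : ∀ h, 1 ≤ h → 0 ≤ γ h)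
    (hsum : Summable fun h => γ (h + 1)) :
    Tendsto (fun n => 𝔼 f, (absCrossTerm γ n f - 4 * Real.exp (-2) * ∑' h, γ (h + 1)) ^ 2)
      atTop (𝓝 0) := by
  set Γ := ∑' h, γ (h + 1)
  set c := 4 * Real.exp (-2) * Γ
  have hc : c = (2 * Real.exp (-1)) ^ 2 * Γ := by
    rw [mul_pow, ← Real.exp_nat_mul]; norm_num [c]
  have hmean : Tendsto (fun n => 𝔼 f, absCrossTerm γ n f) atTop (𝓝 c) := by
    simp only [expect_absCrossTerm, hc]
    exact (tendsto_absDevMoment 2).mul (tendsto_lagWeight hγ hsum)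
  have hsecond : Tendsto (fun n => 𝔼 f, absCrossTerm γ n f ^ 2) atTop (𝓝 (c ^ 2)) := by
    have hmain : Tendsto (fun n => absDevMoment 4 n * lagWeight γ n ^ 2) atTop (𝓝 (c ^ 2)) := by
      rw [show c ^ 2 = (2 * Real.exp (-1)) ^ 4 * Γ ^ 2 by rw [hc]; ring]
      exact (tendsto_absDevMoment 4).mul ((tendsto_lagWeight hγ hsum).pow 2)
    have herr : Tendsto (fun n =>
        𝔼 f, absCrossTerm γ n f ^ 2 - absDevMoment 4 n * lagWeight γ n ^ 2) atTop (𝓝 0) := by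
      refine squeeze_zero_norm' ?_ (tendsto_const_div_atTop_nhds_zero_nat (Γ ^ 2 * (4 * 4112)))
      filter_upwards [eventually_ge_atTop 4] with n hn
      refine (abs_expect_absCrossTerm_sq_sub_le hγ hn).trans ?_
      have hsum0 : 0 ≤ ∑ h ∈ Ico 1 n, γ h := sum_nonneg fun h hh => hγ h (mem_Ico.mp hh).1
      gcongr
      exact sum_Ico_le_tsum hγ hsum n
    simpa using herr.add hmain
  have hexpand : ∀ n, 𝔼 f, (absCrossTerm γ n f - c) ^ 2
      = 𝔼 f, absCrossTerm γ n f ^ 2 - 2 * c * 𝔼 f, absCrossTerm γ n f + c ^ 2 := by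
    intro n
    have : Nonempty (Fin n → Fin n) := ⟨id⟩
    simp only [sub_sq, expect_add_distrib, expect_sub_distrib, ← expect_mul, ← mul_expect,
      Fintype.expect_const]
    ring
  have hlim := (hsecond.sub (hmean.const_mul (2 * c))).add_const (c ^ 2)
  rwa [show c ^ 2 - 2 * c * c + c ^ 2 = 0 by ring, ← funext hexpand] at hlim

lemma multinomialMeasure_le_expect_sq_div {n : ℕ} (X : (Fin n → Fin n) → ℝ) {ε : ℝ}
    (hε : 0 < ε) :
    multinomialMeasure n {f | ε ≤ |X f|} ≤ ENNReal.ofReal ((𝔼 f, X f ^ 2) / ε ^ 2) := by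
  have hμ : multinomialMeasure n {f | ε ≤ |X f|}
      = ENNReal.ofReal (𝔼 f, if ε ≤ |X f| then 1 else 0) := by
    rw [← coe_filter_univ, multinomialMeasure, Measure.smul_apply, Measure.count_apply_finset,
      expect_eq_sum_div_pow, sum_boole, Fintype.card_fun, Fintype.card_fin, smul_eq_mul,
      ENNReal.ofReal_div_of_pos (by exact_mod_cast Nat.pow_self_pos)]
    simp [ENNReal.div_eq_inv_mul]
  rw [hμ]
  refine ENNReal.ofReal_le_ofReal ?_
  rw [expect_div]
  refine expect_le_expect fun f _ => ?_
  split_ifs with h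
  · rw [one_le_div (by positivity)]
    exact pow_le_pow_left₀ hε.le h 2 |>.trans_eq (sq_abs _)
  · positivity

/-- for a summable nonnegative sequence `γ` (indexed by `h ≥ 1`),
`n Σ_{h=1}^{n−1} γ_h Σ_{j=1}^{n−h} |w_j/n − 1/n|·|w_{j+h}/n − 1/n|
  → 4 e^{−2} Σ_{h=1}^∞ γ_h` in probability. -/
theorem stmt10 (γ : ℕ → ℝ) (hγpos : ∀ h, 1 ≤ h → 0 ≤ γ h)
    (hγ : Summable fun h : ℕ => γ (h + 1)) :
    ∀ ε > (0 : ℝ), Tendsto (fun n : ℕ =>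
        multinomialMeasure n
          {f | ε ≤ |(n : ℝ) * ∑ h ∈ Finset.Ico 1 n, γ h *
                  ∑ j ∈ Finset.range (n - h),
                    |(mw n j f : ℝ) / n - 1 / n| * |(mw n (j + h) f : ℝ) / n - 1 / n|
                - 4 * Real.exp (-2) * ∑' h : ℕ, γ (h + 1)|})
      atTop (nhds 0) := by
  intro ε hε
  have hchebyshev := ENNReal.tendsto_ofReal
    ((tendsto_expect_absCrossTerm_sub_sq hγpos hγ).div_const (ε ^ 2))
  rw [zero_div, ENNReal.ofReal_zero] at hchebyshev
  refine tendsto_of_tendsto_of_tendsto_of_le_of_le tendsto_const_nhds hchebyshev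
    (fun _ => zero_le) fun n => ?_
  simp only [mul_sum_abs_sub_div_eq_absCrossTerm]
  exact multinomialMeasure_le_expect_sq_div _ hε
end

section
/- Let {X_i} be a long memory linear process with finite positive variance whose autocovariances satisfy γ_h ~ c' h^{2d−1} for some c' > 0 and 0 < d < 1/2 (equivalently a_k ~ c k^{d−1}). Then, conditionally on the multinomial weights, Var_{X|w}( n^{1/2−d} Σ_{i=1}^n (w_i^{(n)}/n − 1/n) X_i ) → 0 in probability-P_w as n → ∞. -/
open MeasureTheory Finset Filter

/-!
Write `w_j - 1 = ∑_a (1[f a = j] - 1/n)` as a sum over the `n` independent uniform draws `f a`.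
The lag-`h` sum `∑_j (w_j - 1)(w_{j+h} - 1)` is then `∑_{a,b} φ_h (f a) (f b)` for a kernel `φ_h`
whose two marginal means vanish. For such a degenerate kernel, resampling one draw shows that the
products of off-diagonal terms are orthogonal unless they involve the same pair of draws, so the
off-diagonal part has second moment `O(n² 𝔼 φ_h²) = O(n)`, while for `h ≥ 1` the diagonal part is
`O(1)`. Hence the lag-`h` sum of centred weights `w_j/n - 1/n` has mean absolute value
`O(n^{-3/2})` (`O(n^{-1})` for `h = 0`). Together with `∑_{h<n} |γ_h| = O(n^{2d})`, the rescaled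
conditional variance has mean absolute value `O(n^{-2d} + n^{-1/2})`, and Markov's inequality
concludes.
-/

open scoped BigOperators
open Function

section Resampling

variable {ι α : Type*} [Fintype ι] [DecidableEq ι] [Fintype α] [Nonempty α]

theorem expect_expect_update (c : ι) (G : (ι → α) → ℝ) :
    𝔼 f, 𝔼 x, G (update f c x) = 𝔼 f, G f := by
  have hσ : Involutive fun p : (ι → α) × α => (update p.1 c p.2, p.1 c) := by
    intro p; simp
  calc 𝔼 f, 𝔼 x, G (update f c x) = 𝔼 p : (ι → α) × α, G (update p.1 c p.2) :=
        (expect_product' univ univ fun f x => G (update f c x)).symm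
    _ = 𝔼 p : (ι → α) × α, G p.1 := Fintype.expect_equiv (hσ.toPerm _) _ _ fun _ => rfl
    _ = 𝔼 f, 𝔼 _x : α, G f := expect_product' univ univ fun f _ => G f
    _ = 𝔼 f, G f := by simp

theorem expect_pi_apply (a : ι) (p : α → ℝ) : 𝔼 f : ι → α, p (f a) = 𝔼 x, p x := by
  rw [← expect_expect_update a]
  simp

theorem expect_pi_apply_apply {a b : ι} (hab : a ≠ b) (ψ : α → α → ℝ) :
    𝔼 f : ι → α, ψ (f a) (f b) = 𝔼 x, 𝔼 y, ψ x y := by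
  rw [← expect_expect_update a]
  simp only [update_self, update_of_ne hab.symm]
  rw [expect_comm]
  simp only [expect_pi_apply b]

theorem expect_mul_eq_zero_of_expect_eq_zero {a b : ι} (hab : a ≠ b) {ψ : α → α → ℝ}
    (hψ : ∀ y, 𝔼 x, ψ x y = 0) {F : (ι → α) → ℝ} (hF : ∀ f x, F (update f a x) = F f) :
    𝔼 f, F f * ψ (f a) (f b) = 0 := by
  rw [← expect_expect_update a]
  refine expect_eq_zero fun f _ => ?_
  simp only [hF, update_self, update_of_ne hab.symm, ← mul_expect, hψ, mul_zero]

end Resampling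

theorem expect_expect_mul_swap_le {α : Type*} [Fintype α] (φ : α → α → ℝ) :
    𝔼 x, 𝔼 y, φ x y * φ y x ≤ 𝔼 x, 𝔼 y, φ x y ^ 2 := by
  calc 𝔼 x, 𝔼 y, φ x y * φ y x ≤ 𝔼 x, 𝔼 y, (φ x y ^ 2 + φ y x ^ 2) / 2 :=
        expect_le_expect fun x _ => expect_le_expect fun y _ => by
          nlinarith [sq_nonneg (φ x y - φ y x)]
    _ = 𝔼 x, 𝔼 y, φ x y ^ 2 := by
        simp only [← expect_div, expect_add_distrib]
        rw [expect_comm (f := fun x y => φ y x ^ 2)]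
        ring

theorem expect_abs_le_sqrt_expect_sq {β : Type*} [Fintype β] [Nonempty β] (g : β → ℝ) :
    𝔼 i, |g i| ≤ √(𝔼 i, g i ^ 2) := by
  refine Real.le_sqrt_of_sq_le ?_
  have := expect_mul_sq_le_sq_mul_sq univ (fun _ => (1 : ℝ)) fun i => |g i|
  simpa using this

def IsDegenerateKernel {α : Type*} [Fintype α] (φ : α → α → ℝ) : Prop :=
  (∀ y, 𝔼 x, φ x y = 0) ∧ ∀ x, 𝔼 y, φ x y = 0

section DegenerateKernel

variable {ι α : Type*} [Fintype ι] [DecidableEq ι] [Fintype α] [Nonempty α]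
  {φ : α → α → ℝ}

theorem IsDegenerateKernel.expect_mul_eq_zero (hφ : IsDegenerateKernel φ) {p q : ι × ι}
    (hq : q.1 ≠ q.2) (hqp : q ≠ p) (hqs : q ≠ p.swap) :
    𝔼 f : ι → α, φ (f p.1) (f p.2) * φ (f q.1) (f q.2) = 0 := by
  by_cases h₁ : q.1 = p.1 ∨ q.1 = p.2
  · by_cases h₂ : q.2 = p.1 ∨ q.2 = p.2
    · exfalso
      rcases h₁ with h₁ | h₁ <;> rcases h₂ with h₂ | h₂
      · exact hq (h₁.trans h₂.symm)
      · exact hqp (Prod.ext h₁ h₂)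
      · exact hqs (Prod.ext h₁ h₂)
      · exact hq (h₁.trans h₂.symm)
    · push Not at h₂
      exact expect_mul_eq_zero_of_expect_eq_zero (ψ := fun x y => φ y x) hq.symm hφ.2
        fun f x => by simp [update_of_ne h₂.1.symm, update_of_ne h₂.2.symm]
  · push Not at h₁
    exact expect_mul_eq_zero_of_expect_eq_zero hq hφ.1
      fun f x => by simp [update_of_ne h₁.1.symm, update_of_ne h₁.2.symm]

theorem IsDegenerateKernel.expect_sq_sum_offDiag_le (hφ : IsDegenerateKernel φ) :
    𝔼 f : ι → α, (∑ p ∈ univ.offDiag, φ (f p.1) (f p.2)) ^ 2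
      ≤ 2 * #(univ.offDiag : Finset (ι × ι)) * 𝔼 x, 𝔼 y, φ x y ^ 2 := by
  have hrow : ∀ p ∈ (univ.offDiag : Finset (ι × ι)),
      ∑ q ∈ univ.offDiag, 𝔼 f : ι → α, φ (f p.1) (f p.2) * φ (f q.1) (f q.2)
        ≤ 2 * 𝔼 x, 𝔼 y, φ x y ^ 2 := by
    intro p hp
    have hp₁₂ : p.1 ≠ p.2 := (mem_offDiag.1 hp).2.2
    -- only `q = p` and `q = p.swap` use no draw outside `{p.1, p.2}`
    rw [sum_eq_add_of_mem p p.swap hp (mem_offDiag.2 ⟨mem_univ _, mem_univ _, hp₁₂.symm⟩)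
      (fun h => hp₁₂ (congrArg Prod.fst h)) ?_]
    · simp only [Prod.fst_swap, Prod.snd_swap]
      rw [expect_pi_apply_apply hp₁₂ fun x y => φ x y * φ x y,
        expect_pi_apply_apply hp₁₂ fun x y => φ x y * φ y x]
      simp only [← sq]
      linarith [expect_expect_mul_swap_le φ]
    · intro q hq hne
      exact hφ.expect_mul_eq_zero (mem_offDiag.1 hq).2.2 hne.1 hne.2
  calc 𝔼 f : ι → α, (∑ p ∈ univ.offDiag, φ (f p.1) (f p.2)) ^ 2
      = ∑ p ∈ univ.offDiag, ∑ q ∈ univ.offDiag,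
          𝔼 f : ι → α, φ (f p.1) (f p.2) * φ (f q.1) (f q.2) := by
        simp only [sq, sum_mul_sum, expect_sum_comm]
    _ ≤ ∑ _p ∈ univ.offDiag, 2 * 𝔼 x, 𝔼 y, φ x y ^ 2 := sum_le_sum hrow
    _ = 2 * #(univ.offDiag : Finset (ι × ι)) * 𝔼 x, 𝔼 y, φ x y ^ 2 := by
        rw [sum_const, nsmul_eq_mul]; ring

theorem IsDegenerateKernel.expect_abs_sum_sum_le (hφ : IsDegenerateKernel φ) {A : ℝ}
    (hA : ∀ x, |φ x x| ≤ A) :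
    𝔼 f : ι → α, |∑ a, ∑ b, φ (f a) (f b)|
      ≤ Fintype.card ι * (A + √(2 * 𝔼 x, 𝔼 y, φ x y ^ 2)) := by
  set V := 𝔼 x, 𝔼 y, φ x y ^ 2
  have hsplit : ∀ f : ι → α, ∑ a, ∑ b, φ (f a) (f b)
      = ∑ a, φ (f a) (f a) + ∑ p ∈ univ.offDiag, φ (f p.1) (f p.2) := by
    intro f
    rw [← sum_product', ← diag_union_offDiag,
      sum_union (disjoint_diag_offDiag _), sum_diag]
  have hdiag : ∀ f : ι → α, |∑ a, φ (f a) (f a)| ≤ Fintype.card ι * A := fun f =>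
    calc |∑ a, φ (f a) (f a)| ≤ ∑ a, |φ (f a) (f a)| := abs_sum_le_sum_abs _ _
      _ ≤ ∑ _a : ι, A := sum_le_sum fun a _ => hA (f a)
      _ = Fintype.card ι * A := by simp
  have hoff : 𝔼 f : ι → α, |∑ p ∈ univ.offDiag, φ (f p.1) (f p.2)|
      ≤ Fintype.card ι * √(2 * V) := by
    have hcard : (#(univ.offDiag : Finset (ι × ι)) : ℝ) ≤ Fintype.card ι ^ 2 := by
      rw [offDiag_card, card_univ]
      exact_mod_cast (Nat.sub_le _ _).trans (by rw [sq])
    have hV : 0 ≤ V := expect_nonneg fun x _ => expect_nonneg fun y _ => sq_nonneg _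
    calc 𝔼 f : ι → α, |∑ p ∈ univ.offDiag, φ (f p.1) (f p.2)|
        ≤ √(𝔼 f : ι → α, (∑ p ∈ univ.offDiag, φ (f p.1) (f p.2)) ^ 2) :=
          expect_abs_le_sqrt_expect_sq _
      _ ≤ √(Fintype.card ι ^ 2 * (2 * V)) := by
          gcongr
          refine hφ.expect_sq_sum_offDiag_le.trans ?_
          nlinarith
      _ = Fintype.card ι * √(2 * V) := by
          rw [Real.sqrt_mul (by positivity), Real.sqrt_sq (by positivity)]
  calc 𝔼 f : ι → α, |∑ a, ∑ b, φ (f a) (f b)|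
      ≤ 𝔼 f : ι → α, (|∑ a, φ (f a) (f a)| + |∑ p ∈ univ.offDiag, φ (f p.1) (f p.2)|) :=
        expect_le_expect fun f _ => (hsplit f).symm ▸ abs_add_le _ _
    _ ≤ Fintype.card ι * A + Fintype.card ι * √(2 * V) := by
        rw [expect_add_distrib]
        gcongr
        exact (expect_le_expect fun f _ => hdiag f).trans (by rw [Fintype.expect_const])
    _ = Fintype.card ι * (A + √(2 * V)) := by ring

end DegenerateKernel

section LagKernel

variable {n : ℕ}

noncomputable def centredIndicator (n : ℕ) (x : Fin n) (j : ℕ) : ℝ :=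
  (if (x : ℕ) = j then 1 else 0) - 1 / n

theorem sum_ite_val_eq_one {j : ℕ} (hj : j < n) :
    ∑ x : Fin n, (if (x : ℕ) = j then (1 : ℝ) else 0) = 1 := by
  simp_rw [← Fin.eq_mk_iff_val_eq (hk := hj)]
  simp

theorem sum_range_ite_eq_add_le_one (a m h : ℕ) :
    ∑ j ∈ range m, (if a = j + h then (1 : ℝ) else 0) ≤ 1 := by
  rw [sum_boole]
  exact_mod_cast card_le_one.2 fun i hi k hk => by
    simp only [mem_filter] at hi hk
    omega

theorem expect_centredIndicator {j : ℕ} (hj : j < n) :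
    𝔼 x : Fin n, centredIndicator n x j = 0 := by
  have hn : (n : ℝ) ≠ 0 := Nat.cast_ne_zero.2 (by omega)
  simp only [Fintype.expect_eq_sum_div_card, centredIndicator, sum_sub_distrib,
    sum_ite_val_eq_one hj, sum_const, card_univ, Fintype.card_fin, nsmul_eq_mul]
  field_simp
  ring

theorem centredIndicator_mul_centredIndicator (x y : Fin n) (j k : ℕ) :
    centredIndicator n x j * centredIndicator n y k
      = (if (x : ℕ) = j then (1 : ℝ) else 0) * (if (y : ℕ) = k then 1 else 0)
        - (if (x : ℕ) = j then 1 else 0) / n - (if (y : ℕ) = k then 1 else 0) / n + 1 / n ^ 2 := by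
  unfold centredIndicator
  ring

theorem expect_centredIndicator_mul {j k : ℕ} (hj : j < n) (hk : k < n) :
    𝔼 x : Fin n, centredIndicator n x j * centredIndicator n x k
      = ((if j = k then 1 else 0) - 1 / n) / n := by
  have hn : (n : ℝ) ≠ 0 := Nat.cast_ne_zero.2 (by omega)
  have hjk : ∑ x : Fin n, (if (x : ℕ) = j then (1 : ℝ) else 0) * (if (x : ℕ) = k then 1 else 0)
      = if j = k then 1 else 0 := by
    split_ifs with h
    · subst h
      simp only [ite_zero_mul_ite_zero, and_self, mul_one]
      exact sum_ite_val_eq_one hj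
    · exact sum_eq_zero fun x _ => by split_ifs <;> simp_all
  simp only [Fintype.expect_eq_sum_div_card, centredIndicator_mul_centredIndicator,
    sum_add_distrib, sum_sub_distrib, ← sum_div, hjk, sum_ite_val_eq_one hj,
    sum_ite_val_eq_one hk, sum_const, card_univ, Fintype.card_fin, nsmul_eq_mul]
  field_simp
  ring

noncomputable def lagKernel (n h : ℕ) (x y : Fin n) : ℝ :=
  ∑ j ∈ range (n - h), centredIndicator n x j * centredIndicator n y (j + h)

noncomputable def lagSum (n h : ℕ) (f : Fin n → Fin n) : ℝ :=
  ∑ j ∈ range (n - h), ((mw n j f : ℝ) / n - 1 / n) * ((mw n (j + h) f : ℝ) / n - 1 / n)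

theorem mw_div_sub_one_div (n j : ℕ) (f : Fin n → Fin n) :
    (mw n j f : ℝ) / n - 1 / n = (∑ a, centredIndicator n (f a) j) / n := by
  rcases Nat.eq_zero_or_pos n with rfl | hn
  · simp
  have hn : (n : ℝ) ≠ 0 := by positivity
  simp only [centredIndicator, mw, sum_sub_distrib, sum_boole, sum_const, card_univ,
    Fintype.card_fin, nsmul_eq_mul]
  field_simp

theorem lagSum_zero (n : ℕ) (f : Fin n → Fin n) :
    lagSum n 0 f = ∑ j ∈ range n, ((mw n j f : ℝ) / n - 1 / n) ^ 2 := by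
  simp [lagSum, sq]

theorem lagSum_eq (n h : ℕ) (f : Fin n → Fin n) :
    lagSum n h f = (∑ a, ∑ b, lagKernel n h (f a) (f b)) / n ^ 2 := by
  simp only [lagSum, lagKernel, mw_div_sub_one_div, div_mul_div_comm, ← sq, ← sum_div,
    sum_mul_sum]
  rw [sum_comm]
  exact congrArg (· / _) (sum_congr rfl fun a _ => sum_comm)

theorem isDegenerateKernel_lagKernel (n h : ℕ) : IsDegenerateKernel (lagKernel n h) := by
  constructor
  · intro y
    simp only [lagKernel]
    rw [expect_sum_comm]
    refine sum_eq_zero fun j hj => ?_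
    rw [← expect_mul, expect_centredIndicator (by grind), zero_mul]
  · intro x
    simp only [lagKernel]
    rw [expect_sum_comm]
    refine sum_eq_zero fun j hj => ?_
    rw [← mul_expect, expect_centredIndicator (by grind), mul_zero]

theorem abs_lagKernel_self_le (h : ℕ) (x : Fin n) :
    |lagKernel n h x x| ≤ (if h = 0 then 1 else 0) + 3 / n := by
  have hn : (0 : ℝ) < n := by exact_mod_cast x.pos
  set A := ∑ j ∈ range (n - h),
    (if (x : ℕ) = j then (1 : ℝ) else 0) * (if (x : ℕ) = j + h then 1 else 0)
  set B := ∑ j ∈ range (n - h), (if (x : ℕ) = j then (1 : ℝ) else 0)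
  set C := ∑ j ∈ range (n - h), (if (x : ℕ) = j + h then (1 : ℝ) else 0)
  have hφ : lagKernel n h x x = A - B / n - C / n + (n - h : ℕ) / n ^ 2 := by
    simp only [lagKernel, centredIndicator_mul_centredIndicator, sum_add_distrib,
      sum_sub_distrib, ← sum_div, sum_const, card_range, nsmul_eq_mul, mul_one, A, B, C]
  have hA : A ≤ if h = 0 then 1 else 0 := by
    split_ifs with h0
    · subst h0
      simp [A]
    · exact (sum_eq_zero fun j _ => by split_ifs <;> first | rfl | omega | simp).le
  have hB : B ≤ 1 := by simpa only [add_zero] using sum_range_ite_eq_add_le_one x (n - h) 0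
  have hC : C ≤ 1 := sum_range_ite_eq_add_le_one x (n - h) h
  have hm : ((n - h : ℕ) : ℝ) / n ^ 2 ≤ 1 / n := by
    rw [div_le_div_iff₀ (by positivity) hn]
    have : ((n - h : ℕ) : ℝ) ≤ n := by exact_mod_cast Nat.sub_le n h
    nlinarith
  have hA₀ : 0 ≤ A := by positivity
  have hB₀ : 0 ≤ B := by positivity
  have hC₀ : 0 ≤ C := by positivity
  rw [hφ, abs_le]
  constructor <;> linarith [div_le_div_of_nonneg_right hB hn.le, div_nonneg hB₀ hn.le,
    div_le_div_of_nonneg_right hC hn.le, div_nonneg hC₀ hn.le,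
    div_nonneg (Nat.cast_nonneg (n - h)) (sq_nonneg (n : ℝ)), hA₀.trans hA,
    one_div_nonneg.2 hn.le, show (3 : ℝ) / n = 3 * (1 / n) by ring]

theorem expect_sq_lagKernel_le [NeZero n] (h : ℕ) :
    𝔼 x, 𝔼 y, lagKernel n h x y ^ 2 ≤ 2 / n := by
  have hn : (1 : ℝ) ≤ n := by exact_mod_cast NeZero.one_le
  have hexpand : 𝔼 x, 𝔼 y, lagKernel n h x y ^ 2
      = ∑ j ∈ range (n - h), ∑ k ∈ range (n - h),
          ((if j = k then 1 else 0) - 1 / (n : ℝ)) ^ 2 / n ^ 2 := by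
    conv_lhs => simp only [lagKernel, sq, sum_mul_sum, expect_sum_comm]
    refine sum_congr rfl fun j hj => sum_congr rfl fun k hk => ?_
    rw [mem_range] at hj hk
    calc 𝔼 x, 𝔼 y, centredIndicator n x j * centredIndicator n y (j + h)
          * (centredIndicator n x k * centredIndicator n y (k + h))
        = (𝔼 x, centredIndicator n x j * centredIndicator n x k)
          * 𝔼 y, centredIndicator n y (j + h) * centredIndicator n y (k + h) := by
          rw [expect_mul_expect]
          exact expect_congr rfl fun x _ => expect_congr rfl fun y _ => by ring
      _ = ((if j = k then 1 else 0) - 1 / n) ^ 2 / n ^ 2 := by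
          rw [expect_centredIndicator_mul (by omega) (by omega),
            expect_centredIndicator_mul (by omega) (by omega)]
          simp only [add_left_inj]
          ring
  have hterm : ∀ j k : ℕ, ((if j = k then 1 else 0) - 1 / (n : ℝ)) ^ 2
      ≤ (if j = k then 1 else 0) + 1 / n ^ 2 := by
    intro j k
    have : 0 ≤ 1 / (n : ℝ) := by positivity
    rw [← one_div_pow]
    split_ifs <;> nlinarith
  have hm : ((n - h : ℕ) : ℝ) ≤ n := by exact_mod_cast Nat.sub_le n h
  rw [hexpand]
  calc ∑ j ∈ range (n - h), ∑ k ∈ range (n - h),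
        ((if j = k then 1 else 0) - 1 / (n : ℝ)) ^ 2 / n ^ 2
      ≤ ∑ j ∈ range (n - h), ∑ k ∈ range (n - h),
          ((if j = k then 1 else 0) + 1 / (n : ℝ) ^ 2) / n ^ 2 := by
        gcongr with j _ k _
        exact hterm j k
    _ = (((n - h : ℕ) : ℝ) + ((n - h : ℕ) : ℝ) ^ 2 / n ^ 2) / n ^ 2 := by
        simp only [← sum_div, sum_add_distrib, sum_ite_eq, sum_ite_mem, inter_self, sum_const,
          card_range, nsmul_eq_mul]
        ring
    _ ≤ 2 / n := by
        rw [div_le_div_iff₀ (by positivity) (by positivity)]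
        have : ((n - h : ℕ) : ℝ) ^ 2 / n ^ 2 ≤ 1 := by
          rw [div_le_one (by positivity)]
          gcongr
        nlinarith

theorem expect_abs_lagSum_le [NeZero n] (h : ℕ) :
    𝔼 f, |lagSum n h f| ≤ ((if h = 0 then 1 else 0) + 3 / n + 2 / √n) / n := by
  have hn : (0 : ℝ) < n := by exact_mod_cast NeZero.pos n
  have hU := (isDegenerateKernel_lagKernel n h).expect_abs_sum_sum_le (ι := Fin n)
    (abs_lagKernel_self_le h)
  have hV : √(2 * 𝔼 x, 𝔼 y, lagKernel n h x y ^ 2) ≤ 2 / √n := by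
    calc √(2 * 𝔼 x, 𝔼 y, lagKernel n h x y ^ 2) ≤ √(2 ^ 2 / n) := by
          rw [show (2 : ℝ) ^ 2 / n = 2 * (2 / n) by ring]
          gcongr
          exact expect_sq_lagKernel_le h
      _ = 2 / √n := by rw [Real.sqrt_div' _ hn.le, Real.sqrt_sq zero_le_two]
  simp only [lagSum_eq, abs_div, abs_of_nonneg (sq_nonneg (n : ℝ)), ← expect_div]
  rw [Fintype.card_fin] at hU
  calc (𝔼 f : Fin n → Fin n, |∑ a, ∑ b, lagKernel n h (f a) (f b)|) / n ^ 2
      ≤ n * ((if h = 0 then 1 else 0) + 3 / n + 2 / √n) / n ^ 2 := by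
        refine div_le_div_of_nonneg_right (hU.trans ?_) (by positivity)
        rw [add_assoc, add_assoc]
        exact mul_le_mul_of_nonneg_left (by linarith) hn.le
    _ = ((if h = 0 then 1 else 0) + 3 / n + 2 / √n) / n := by
        rw [sq, ← div_div, mul_div_cancel_left₀ _ hn.ne']

theorem expect_abs_lagSum_zero_le [NeZero n] : 𝔼 f, |lagSum n 0 f| ≤ 6 / n := by
  have hn : (1 : ℝ) ≤ n := by exact_mod_cast NeZero.one_le
  refine (expect_abs_lagSum_le 0).trans (div_le_div_of_nonneg_right ?_ (by positivity))
  have : 3 / (n : ℝ) ≤ 3 := div_le_self (by norm_num) hn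
  have : 2 / √(n : ℝ) ≤ 2 := div_le_self (by norm_num) (Real.one_le_sqrt.2 hn)
  rw [if_pos rfl]
  linarith

theorem expect_abs_lagSum_le_of_ne_zero [NeZero n] {h : ℕ} (h0 : h ≠ 0) :
    𝔼 f, |lagSum n h f| ≤ 5 / (n * √n) := by
  have hn : (1 : ℝ) ≤ n := by exact_mod_cast NeZero.one_le
  have : 3 / (n : ℝ) ≤ 3 / √n := div_le_div_of_nonneg_left (by norm_num) (by positivity)
    (Real.sqrt_le_self_iff.2 (Or.inr hn))
  refine (expect_abs_lagSum_le h).trans ?_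
  rw [if_neg h0, mul_comm (n : ℝ), ← div_div]
  refine div_le_div_of_nonneg_right ?_ (by positivity)
  linarith [show (5 : ℝ) / √n = 3 / √n + 2 / √n by ring]

end LagKernel

theorem sum_range_rpow_sub_one_le {p : ℝ} (hp0 : 0 < p) (hp1 : p ≤ 1) (m : ℕ) :
    ∑ h ∈ range m, ((h + 1 : ℕ) : ℝ) ^ (p - 1) ≤ (m : ℝ) ^ p / p := by
  induction m with
  | zero => simp [Real.zero_rpow hp0.ne']
  | succ m ih =>
    have hm : (0 : ℝ) < m + 1 := by positivity
    have hs : -1 ≤ -1 / ((m : ℝ) + 1) := by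
      rw [neg_div, neg_le_neg_iff, div_le_one hm]; linarith
    -- Bernoulli: `(m + 1) ^ (p - 1) ≤ ((m + 1) ^ p - m ^ p) / p`, so the sum telescopes.
    have hpow : (m : ℝ) ^ p ≤ ((m : ℝ) + 1) ^ p - p * ((m : ℝ) + 1) ^ (p - 1) :=
      calc (m : ℝ) ^ p = (((m : ℝ) + 1) * (1 + -1 / (m + 1))) ^ p := by
            congr 1; field_simp; ring
        _ = ((m : ℝ) + 1) ^ p * (1 + -1 / (m + 1)) ^ p :=
            Real.mul_rpow hm.le (by linarith)
        _ ≤ ((m : ℝ) + 1) ^ p * (1 + p * (-1 / (m + 1))) := by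
            gcongr; exact rpow_one_add_le_one_add_mul_self hs hp0.le hp1
        _ = ((m : ℝ) + 1) ^ p - p * ((m : ℝ) + 1) ^ (p - 1) := by
            rw [Real.rpow_sub_one hm.ne']; ring
    have hstep : (m : ℝ) ^ p / p + ((m : ℝ) + 1) ^ (p - 1) ≤ ((m : ℝ) + 1) ^ p / p := by
      rw [div_add' _ _ _ hp0.ne', div_le_div_iff_of_pos_right hp0]
      linarith
    rw [sum_range_succ]
    push_cast at ih ⊢
    linarith

theorem sum_Ico_one_rpow_sub_one_le {p : ℝ} (hp0 : 0 < p) (hp1 : p ≤ 1) (n : ℕ) :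
    ∑ h ∈ Ico 1 n, (h : ℝ) ^ (p - 1) ≤ (n : ℝ) ^ p / p := by
  rw [sum_Ico_eq_sum_range]
  calc ∑ k ∈ range (n - 1), ((1 + k : ℕ) : ℝ) ^ (p - 1)
      = ∑ k ∈ range (n - 1), ((k + 1 : ℕ) : ℝ) ^ (p - 1) := by simp only [add_comm 1]
    _ ≤ ((n - 1 : ℕ) : ℝ) ^ p / p := sum_range_rpow_sub_one_le hp0 hp1 _
    _ ≤ (n : ℝ) ^ p / p := by gcongr; exact_mod_cast Nat.sub_le n 1

theorem exists_abs_le_mul_rpow {γ : ℕ → ℝ} {q c : ℝ}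
    (hγ : Tendsto (fun h : ℕ => γ h / (h : ℝ) ^ q) atTop (nhds c)) :
    ∃ M, 0 ≤ M ∧ ∀ h : ℕ, 1 ≤ h → |γ h| ≤ M * (h : ℝ) ^ q := by
  obtain ⟨M, hM⟩ := hγ.abs.bddAbove_range
  refine ⟨M, (abs_nonneg _).trans (hM ⟨0, rfl⟩), fun h hh => ?_⟩
  have hpos : (0 : ℝ) < (h : ℝ) ^ q := Real.rpow_pos_of_pos (by exact_mod_cast hh) q
  have : |γ h / (h : ℝ) ^ q| ≤ M := hM ⟨h, rfl⟩
  rwa [abs_div, abs_of_pos hpos, div_le_iff₀ hpos] at this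

-- `Var(∑ᵢ (wᵢ/n - 1/n) Xᵢ | w)` for a stationary `X` with autocovariances `γ`.
noncomputable def bootstrapCondVar (γ : ℕ → ℝ) (n : ℕ) (f : Fin n → Fin n) : ℝ :=
  γ 0 * ∑ j ∈ range n, ((mw n j f : ℝ) / n - 1 / n) ^ 2
    + 2 * ∑ h ∈ Ico 1 n, γ h * lagSum n h f

theorem expect_abs_bootstrapCondVar_le {n : ℕ} [NeZero n] {γ : ℕ → ℝ} {p M : ℝ} (hp0 : 0 < p)
    (hp1 : p ≤ 1) (hM : 0 ≤ M) (hγ : ∀ h : ℕ, 1 ≤ h → |γ h| ≤ M * (h : ℝ) ^ (p - 1)) :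
    𝔼 f, |bootstrapCondVar γ n f| ≤ 6 * |γ 0| / n + 10 * M * n ^ p / (p * n * √n) := by
  have hγsum : ∑ h ∈ Ico 1 n, |γ h| ≤ M * n ^ p / p :=
    calc ∑ h ∈ Ico 1 n, |γ h| ≤ ∑ h ∈ Ico 1 n, M * (h : ℝ) ^ (p - 1) :=
          sum_le_sum fun h hh => hγ h (mem_Ico.1 hh).1
      _ ≤ M * n ^ p / p := by
          rw [← mul_sum, mul_div_assoc]
          exact mul_le_mul_of_nonneg_left (sum_Ico_one_rpow_sub_one_le hp0 hp1 n) hM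
  have hpt : ∀ f, |bootstrapCondVar γ n f|
      ≤ |γ 0| * |lagSum n 0 f| + 2 * ∑ h ∈ Ico 1 n, |γ h| * |lagSum n h f| := by
    intro f
    rw [bootstrapCondVar, ← lagSum_zero]
    refine (abs_add_le _ _).trans ?_
    rw [abs_mul, abs_mul, abs_two]
    gcongr
    exact (abs_sum_le_sum_abs _ _).trans_eq (sum_congr rfl fun h _ => abs_mul _ _)
  calc 𝔼 f, |bootstrapCondVar γ n f|
      ≤ 𝔼 f, (|γ 0| * |lagSum n 0 f| + 2 * ∑ h ∈ Ico 1 n, |γ h| * |lagSum n h f|) :=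
        expect_le_expect fun f _ => hpt f
    _ = |γ 0| * 𝔼 f, |lagSum n 0 f| + 2 * ∑ h ∈ Ico 1 n, |γ h| * 𝔼 f, |lagSum n h f| := by
        rw [expect_add_distrib, ← mul_expect, ← mul_expect, expect_sum_comm]
        simp only [← mul_expect]
    _ ≤ |γ 0| * (6 / n) + 2 * ∑ h ∈ Ico 1 n, |γ h| * (5 / (n * √n)) := by
        gcongr with h hh
        · exact expect_abs_lagSum_zero_le
        · exact expect_abs_lagSum_le_of_ne_zero (by grind)
    _ ≤ |γ 0| * (6 / n) + 2 * (M * n ^ p / p) * (5 / (n * √n)) := by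
        rw [← sum_mul, mul_assoc]
        gcongr
    _ = 6 * |γ 0| / n + 10 * M * n ^ p / (p * n * √n) := by
        field_simp
        ring

theorem multinomialMeasure_le_expect_abs_div {n : ℕ} (g : (Fin n → Fin n) → ℝ) {ε : ℝ}
    (hε : 0 < ε) :
    multinomialMeasure n {f | ε ≤ |g f|} ≤ ENNReal.ofReal ((𝔼 f, |g f|) / ε) := by
  set S := {f | ε ≤ |g f|}.toFinite.toFinset
  have hmarkov : (#S : ℝ) * ε ≤ ∑ f, |g f| :=
    calc (#S : ℝ) * ε = ∑ _f ∈ S, ε := by rw [sum_const, nsmul_eq_mul]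
      _ ≤ ∑ f ∈ S, |g f| := sum_le_sum fun f hf => by simpa [S] using hf
      _ ≤ ∑ f, |g f| := sum_le_sum_of_subset_of_nonneg (subset_univ _) fun _ _ _ => abs_nonneg _
  have hcard : (0 : ℝ) < Fintype.card (Fin n → Fin n) := by
    rw [Fintype.card_fun, Fintype.card_fin]
    exact_mod_cast Nat.pow_self_pos
  have hμ : multinomialMeasure n {f | ε ≤ |g f|}
      = ENNReal.ofReal (#S / Fintype.card (Fin n → Fin n)) := by
    rw [multinomialMeasure, Measure.smul_apply, smul_eq_mul,
      Measure.count_apply_finite _ (Set.toFinite _), ENNReal.ofReal_div_of_pos hcard,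
      ENNReal.ofReal_natCast, ENNReal.ofReal_natCast, ENNReal.div_eq_inv_mul]
  rw [hμ, Fintype.expect_eq_sum_div_card]
  refine ENNReal.ofReal_le_ofReal ?_
  rw [div_div, mul_comm, ← div_div, div_le_div_iff_of_pos_right hcard,
    le_div_iff₀ hε]
  exact hmarkov

theorem tendsto_multinomialMeasure_of_tendsto_expect_abs
    {Z : (n : ℕ) → (Fin n → Fin n) → ℝ} (hZ : Tendsto (fun n => 𝔼 f, |Z n f|) atTop (nhds 0))
    {ε : ℝ} (hε : 0 < ε) :
    Tendsto (fun n => multinomialMeasure n {f | ε ≤ |Z n f|}) atTop (nhds 0) := by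
  have hbound : Tendsto (fun n => ENNReal.ofReal ((𝔼 f, |Z n f|) / ε)) atTop (nhds 0) := by
    simpa using ENNReal.tendsto_ofReal (hZ.div_const ε)
  exact tendsto_of_tendsto_of_tendsto_of_le_of_le tendsto_const_nhds hbound
    (fun _ => zero_le) fun n => multinomialMeasure_le_expect_abs_div (Z n) hε

theorem expect_abs_rpow_mul_bootstrapCondVar_le {n : ℕ} [NeZero n] {γ : ℕ → ℝ} {d M : ℝ}
    (hd0 : 0 < d) (hd : d < 1 / 2) (hM : 0 ≤ M)
    (hγ : ∀ h : ℕ, 1 ≤ h → |γ h| ≤ M * (h : ℝ) ^ (2 * d - 1)) :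
    𝔼 f, |(n : ℝ) ^ (1 - 2 * d) * bootstrapCondVar γ n f|
      ≤ 6 * |γ 0| * ((n : ℝ) ^ (2 * d))⁻¹ + 5 * M / d * (√(n : ℝ))⁻¹ := by
  have hn : (0 : ℝ) < n := by exact_mod_cast NeZero.pos n
  calc 𝔼 f, |(n : ℝ) ^ (1 - 2 * d) * bootstrapCondVar γ n f|
      = (n : ℝ) ^ (1 - 2 * d) * 𝔼 f, |bootstrapCondVar γ n f| := by
        simp only [abs_mul, abs_of_pos (Real.rpow_pos_of_pos hn _), mul_expect]
    _ ≤ (n : ℝ) ^ (1 - 2 * d)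
          * (6 * |γ 0| / n + 10 * M * n ^ (2 * d) / (2 * d * n * √n)) := by
        gcongr
        exact expect_abs_bootstrapCondVar_le (by positivity) (by linarith) hM hγ
    _ = 6 * |γ 0| * ((n : ℝ) ^ (2 * d))⁻¹ + 5 * M / d * (√(n : ℝ))⁻¹ := by
        have : (0 : ℝ) < n ^ (2 * d) := Real.rpow_pos_of_pos hn _
        have : (0 : ℝ) < √n := Real.sqrt_pos.2 hn
        rw [Real.rpow_sub hn, Real.rpow_one]
        field_simp
        ring

theorem tendsto_expect_abs_rpow_mul_bootstrapCondVar {γ : ℕ → ℝ} {d c : ℝ} (hd0 : 0 < d)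
    (hd : d < 1 / 2) (hγ : Tendsto (fun h : ℕ => γ h / (h : ℝ) ^ (2 * d - 1)) atTop (nhds c)) :
    Tendsto (fun n : ℕ => 𝔼 f, |(n : ℝ) ^ (1 - 2 * d) * bootstrapCondVar γ n f|)
      atTop (nhds 0) := by
  obtain ⟨M, hM, hγM⟩ := exists_abs_le_mul_rpow hγ
  have hlim : Tendsto (fun n : ℕ => 6 * |γ 0| * ((n : ℝ) ^ (2 * d))⁻¹ + 5 * M / d * (√(n : ℝ))⁻¹)
      atTop (nhds 0) := by
    have h₁ := ((tendsto_rpow_atTop (by positivity : 0 < 2 * d)).comp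
      tendsto_natCast_atTop_atTop).inv_tendsto_atTop
    have h₂ := (Real.tendsto_sqrt_atTop.comp tendsto_natCast_atTop_atTop).inv_tendsto_atTop
    simpa using (h₁.const_mul (6 * |γ 0|)).add (h₂.const_mul (5 * M / d))
  refine tendsto_of_tendsto_of_tendsto_of_le_of_le' tendsto_const_nhds hlim
    (Eventually.of_forall fun n => expect_nonneg fun f _ => abs_nonneg _) ?_
  filter_upwards [eventually_ge_atTop 1] with n hn
  have : NeZero n := ⟨by omega⟩
  exact expect_abs_rpow_mul_bootstrapCondVar_le hd0 hd hM hγM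

theorem stmt16_general (γ : ℕ → ℝ) (d c : ℝ) (hd0 : 0 < d) (hd : d < 1 / 2)
    (hγ : Tendsto (fun h : ℕ => γ h / (h : ℝ) ^ (2 * d - 1)) atTop (nhds c)) :
    ∀ ε > (0 : ℝ), Tendsto (fun n : ℕ =>
        multinomialMeasure n
          {f | ε ≤ |(n : ℝ) ^ ((1 : ℝ) - 2 * d) *
              (γ 0 * ∑ j ∈ Finset.range n, ((mw n j f : ℝ) / n - 1 / n) ^ 2
                + 2 * ∑ h ∈ Finset.Ico 1 n, γ h *
                    ∑ j ∈ Finset.range (n - h),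
                      ((mw n j f : ℝ) / n - 1 / n) * ((mw n (j + h) f : ℝ) / n - 1 / n))|})
      atTop (nhds 0) := by
  intro ε hε
  exact tendsto_multinomialMeasure_of_tendsto_expect_abs
    (Z := fun n f => (n : ℝ) ^ (1 - 2 * d) * bootstrapCondVar γ n f)
    (tendsto_expect_abs_rpow_mul_bootstrapCondVar hd0 hd hγ) hε

/-- for a long memory process with autocovariances `γ_h ~ c' h^{2d−1}`
(`0 < d < 1/2`), the conditional (given the weights) variance of
`n^{1/2−d} Σᵢ (wᵢ/n − 1/n) Xᵢ`, namely
`n^{1−2d} (γ_0 Σⱼ(wⱼ/n − 1/n)² + 2 Σ_h γ_h Σⱼ (wⱼ/n − 1/n)(w_{j+h}/n − 1/n))`,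
tends to `0` in probability-`P_w`. -/
theorem stmt16 (γ : ℕ → ℝ) (d c : ℝ) (hd0 : 0 < d) (hd : d < 1 / 2) (hc : 0 < c)
    (hγ : Tendsto (fun h : ℕ => γ h / (h : ℝ) ^ (2 * d - 1)) atTop (nhds c)) :
    ∀ ε > (0 : ℝ), Tendsto (fun n : ℕ =>
        multinomialMeasure n
          {f | ε ≤ |(n : ℝ) ^ ((1 : ℝ) - 2 * d) *
              (γ 0 * ∑ j ∈ Finset.range n, ((mw n j f : ℝ) / n - 1 / n) ^ 2
                + 2 * ∑ h ∈ Finset.Ico 1 n, γ h *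
                    ∑ j ∈ Finset.range (n - h),
                      ((mw n j f : ℝ) / n - 1 / n) * ((mw n (j + h) f : ℝ) / n - 1 / n))|})
      atTop (nhds 0) :=
  stmt16_general γ d c hd0 hd hγ
end
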